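/- arXiv:math/9901095 — 4 statements merged into one kernel-verified Lean document; each statement's English description precedes it below -/
import Mathlib

section
/- Let U be a vertex Lie algebra over ℂ. The bilinear map B on M(U) determined by B(uₙ, v_p) = Σ_{i≥0} binom(n,i)·(u_iv)_{n+p−i} for u,v ∈ U and n,p ∈ ℤ satisfies B(K(U), M(U)) ⊆ K(U) and B(M(U), K(U)) ⊆ K(U), hence descends to the quotient L(U) = M(U)/K(U); the induced bracket [uₙ, v_p] = Σ_{i≥0} binom(n,i)·(u_iv)_{n+p−i} makes L(U) a Lie algebra. Moreover (Du)ₙ = −n·u_{n−1} holds in L(U), and the map D : L(U) → L(U) determined by uₙ ↦ (Du)ₙ is a well-defined derivation of this Lie algebra. -/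
open scoped BigOperators

noncomputable section

/-- A vertex Lie algebra over `ℂ`. -/
structure VertexLie (U : Type*) [AddCommGroup U] [Module ℂ U] where
  D : U →ₗ[ℂ] U
  mul : ℕ → U →ₗ[ℂ] U →ₗ[ℂ] U
  trunc : ∀ u v : U, ∃ N : ℕ, ∀ n : ℕ, N ≤ n → mul n u v = 0
  dLeft : ∀ (n : ℕ) (u v : U), mul (n + 1) (D u) v = (-((n : ℂ) + 1)) • mul n u v
  dLeftZero : ∀ u v : U, mul 0 (D u) v = 0
  leibniz : ∀ (n : ℕ) (u v : U), D (mul n u v) = mul n (D u) v + mul n u (D v)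
  skew : ∀ (n : ℕ) (u v : U),
    mul n u v =
      -∑ᶠ k : ℕ, (((-1 : ℂ) ^ (n + k)) / (Nat.factorial k : ℂ)) • ((D ^ k) (mul (n + k) v u))
  jacobi : ∀ (k m n : ℕ) (u v w : U),
    ∑ᶠ i : ℕ, ((-1 : ℂ) ^ i * (Nat.choose k i : ℂ)) •
        (mul (m + k - i) u (mul (n + i) v w)
          - ((-1 : ℂ) ^ k) • mul (n + k - i) v (mul (m + i) u w))
      = ∑ᶠ i : ℕ, ((Nat.choose m i : ℂ)) • mul (m + n - i) (mul (k + i) u v) w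

/-- The generalized binomial coefficient `binom(n,i) = n(n−1)⋯(n−i+1)/i!` for `n : ℤ`,
viewed in `ℂ`. -/
def zbinom (n : ℤ) (i : ℕ) : ℂ :=
  (∏ j ∈ Finset.range i, ((n : ℂ) - (j : ℂ))) / (Nat.factorial i : ℂ)

variable {U : Type*} [AddCommGroup U] [Module ℂ U]

/-- The subspace `K(U)` of `M(U) = ⊕_{n ∈ ℤ} U`, spanned by the elements
`(Du)ₙ + n·u_{n−1}`. -/
def Ksub (A : VertexLie U) : Submodule ℂ (ℤ →₀ U) :=
  Submodule.span ℂ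
    {x : ℤ →₀ U | ∃ (u : U) (n : ℤ),
      x = Finsupp.single n (A.D u) + (n : ℂ) • Finsupp.single (n - 1) u}

/-- The defining property of the bilinear map `B` on `M(U)`:
`B(uₙ, v_p) = Σ_{i≥0} binom(n,i)·(u_iv)_{n+p−i}`. -/
def BProp (A : VertexLie U)
    (B : (ℤ →₀ U) →ₗ[ℂ] (ℤ →₀ U) →ₗ[ℂ] (ℤ →₀ U)) : Prop :=
  ∀ (n p : ℤ) (u v : U),
    B (Finsupp.single n u) (Finsupp.single p v)
      = ∑ᶠ i : ℕ, zbinom n i • Finsupp.single (n + p - (i : ℤ)) (A.mul i u v)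

/-!
Identify `M(U)` with `U ⊗ ℂ[t, t⁻¹]` via `uₙ = u ⊗ tⁿ`. Then `K(U)` is the image of
`D ⊗ 1 + 1 ⊗ d/dt`, and both summands are derivations of `B`. The bracket vanishes identically
when its left argument lies in `K(U)`, because `(Du)_{i+1} v = -(i+1) uᵢv` and
`(i+1)·binom(n,i+1) = n·binom(n-1,i)`; the derivation property then gives
`B(x, (D + d/dt) y) = (D + d/dt) B(x, y) ∈ K(U)`. Modulo `K(U)` one has
`(Dᵏw)_q = (-1)ᵏ k! binom(q,k) w_{q-k}`, which turns half skew symmetry into skew symmetry of the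
bracket, the coefficients collapsing by `Σᵢ (-1)ⁱ binom(n,i) binom(n+p-i, m-i) = binom(p,m)`.
The Jacobi identity holds already in `M(U)`: the case `k = 0` of the half Jacobi identity is the
commutator formula for the products `uᵢ`, and Chu–Vandermonde matches the coefficients.
-/

open Finset Filter
open Finsupp (single lsingle)

namespace Ring

variable {R : Type*} [CommRing R] [BinomialRing R]

lemma succ_mul_choose_succ (r : R) (k : ℕ) :
    ((k : R) + 1) * choose r (k + 1) = (r - k) * choose r k := by
  have h := choose_smul_choose r (n := k + 1) (k := k) (by omega)
  rwa [Nat.choose_succ_self_right, Nat.add_sub_cancel_left, choose_one_right, nsmul_eq_mul,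
    Nat.cast_succ, mul_comm (choose r k)] at h

lemma mul_choose_sub_one (r : R) (k : ℕ) :
    r * choose (r - 1) k = ((k : R) + 1) * choose r (k + 1) := by
  have h := choose_smul_choose r (n := k + 1) (k := 1) (by omega)
  rwa [Nat.choose_one_right, Nat.add_sub_cancel, choose_one_right, nsmul_eq_mul, Nat.cast_succ,
    Nat.cast_one, eq_comm] at h

lemma choose_neg_eq_neg_one_pow_mul (r : R) (n : ℕ) :
    choose (-r) n = (-1) ^ n * choose (r + n - 1) n := by
  rw [choose_neg, Units.smul_def, zsmul_eq_mul, Int.cast_negOnePow_natCast]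

lemma choose_add_eq_sum_range (r s : R) (m : ℕ) :
    choose (r + s) m = ∑ i ∈ range (m + 1), choose r i * choose s (m - i) := by
  rw [add_choose_eq m (Commute.all r s),
    Nat.sum_antidiagonal_eq_sum_range_succ fun i j => choose r i * choose s j]

/-- Upper negation turns this into Chu–Vandermonde. -/
lemma sum_range_neg_one_pow_mul_choose_mul_choose (r s : R) (m : ℕ) :
    ∑ i ∈ range (m + 1), (-1) ^ i * choose r i * choose (r + s - i) (m - i) = choose s m := by
  have hterm : ∀ i ∈ range (m + 1), (-1) ^ i * choose r i * choose (r + s - i) (m - i)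
      = (-1) ^ m * (choose r i * choose (m - s - 1 - r) (m - i)) := by
    intro i hi
    obtain ⟨d, rfl⟩ := Nat.exists_eq_add_of_le (Nat.lt_succ_iff.1 (mem_range.1 hi))
    rw [Nat.add_sub_cancel_left, ← neg_sub, choose_neg_eq_neg_one_pow_mul, pow_add]
    push_cast
    ring_nf
  rw [sum_congr rfl hterm, ← Finset.mul_sum, ← choose_add_eq_sum_range, ← neg_neg s,
    choose_neg_eq_neg_one_pow_mul (-s)]
  ring_nf

end Ring

lemma zbinom_eq_choose (n : ℤ) (i : ℕ) : zbinom n i = Ring.choose (n : ℂ) i := by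
  rw [Ring.choose_eq_smul, ← Polynomial.aeval_eq_smeval, ← Polynomial.eval_map_algebraMap,
    descPochhammer_map, descPochhammer_eval_eq_prod_range, zbinom, smul_eq_mul, div_eq_inv_mul]

lemma finsum_eq_sum_range {M : Type*} [AddCommMonoid M] {f : ℕ → M} {N : ℕ}
    (h : ∀ i ≥ N, f i = 0) : ∑ᶠ i, f i = ∑ i ∈ range N, f i :=
  finsum_eq_finsetSum_of_support_subset f fun i hi =>
    mem_range.2 (lt_of_not_ge fun hNi => hi (h i hNi))

lemma support_finite_of_eventually_eq_zero {M : Type*} [Zero M] {f : ℕ → M}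
    (h : ∀ᶠ i in atTop, f i = 0) : (Function.support f).Finite :=
  eventually_cofinite.1 (Nat.cofinite_eq_atTop ▸ h)

lemma sum_range_sum_range_smul_add_eq {R M : Type*} [Semiring R] [AddCommMonoid M] [Module R M]
    {N : ℕ} (c : ℕ → ℕ → R) {f : ℕ → M} (hf : ∀ m ≥ N, f m = 0) :
    ∑ i ∈ range N, ∑ k ∈ range N, c i k • f (i + k)
      = ∑ m ∈ range N, (∑ i ∈ range (m + 1), c i (m - i)) • f m := by
  have hdiag : ∀ m ∈ range N, (∑ i ∈ range (m + 1), c i (m - i)) • f m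
      = ∑ i ∈ range (m + 1), c i (m - i) • f (i + (m - i)) := fun m _ => by
    rw [sum_smul]
    exact sum_congr rfl fun i hi => by rw [Nat.add_sub_cancel' (Nat.lt_succ_iff.1 (mem_range.1 hi))]
  rw [sum_congr rfl hdiag, sum_range_diag_flip N fun i k => c i k • f (i + k)]
  refine sum_congr rfl fun i hi => (sum_subset (range_subset_range.2 (Nat.sub_le N i)) ?_).symm
  intro k _ hk
  rw [hf _ (by simp at hk; omega), smul_zero]

/-- With `i = s + d`, `binom(a,i) binom(i,s) = binom(a,s) binom(a-s,d)`; then Chu–Vandermonde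
in `(d, j)`. -/
lemma sum_range_choose_mul_choose_smul_sub {S M : Type*} [CommRing S] [BinomialRing S]
    [AddCommMonoid M] [Module S M] (a b : S) {s R N : ℕ} (hN : s + R ≤ N) {f : ℕ → M}
    (hf : ∀ m ≥ R, f m = 0) :
    ∑ i ∈ range N, ∑ j ∈ range R,
        (Ring.choose a i * (i.choose s : S) * Ring.choose b j) • f (i + j - s)
      = Ring.choose a s • ∑ m ∈ range R, Ring.choose (a + b - s) m • f m := by
  rw [eventually_constant_sum (N := s + R) (fun i hi => sum_eq_zero fun j _ => by
    rw [hf _ (by omega), smul_zero]) hN, sum_range_add, sum_eq_zero fun i hi => sum_eq_zero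
    fun j _ => by rw [Nat.choose_eq_zero_of_lt (mem_range.1 hi), Nat.cast_zero, mul_zero,
      zero_mul, zero_smul], zero_add]
  have hsub : ∀ d, Ring.choose a (s + d) * ((s + d).choose s : S)
      = Ring.choose a s * Ring.choose (a - s) d := fun d => by
    have h := Ring.choose_smul_choose a (Nat.le_add_right s d)
    rwa [Nat.add_sub_cancel_left, nsmul_eq_mul, mul_comm] at h
  simp_rw [hsub, add_assoc, Nat.add_sub_cancel_left, add_sub_right_comm a b,
    Ring.choose_add_eq_sum_range]
  rw [← sum_range_sum_range_smul_add_eq (fun d j => Ring.choose (a - s) d * Ring.choose b j) hf]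
  simp_rw [smul_sum, smul_smul, mul_assoc]

def LinearMap.finsum₂ {ι R M N P : Type*} [CommSemiring R] [AddCommMonoid M] [AddCommMonoid N]
    [AddCommMonoid P] [Module R M] [Module R N] [Module R P] (f : ι → M →ₗ[R] N →ₗ[R] P)
    (hf : ∀ m n, (Function.support fun i => f i m n).Finite) : M →ₗ[R] N →ₗ[R] P :=
  LinearMap.mk₂ R (fun m n => ∑ᶠ i, f i m n)
    (fun _ _ _ => by simp only [map_add, LinearMap.add_apply, finsum_add_distrib (hf _ _) (hf _ _)])
    (fun c m n => by simp only [map_smul, LinearMap.smul_apply, smul_finsum' c (hf m n)])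
    (fun _ _ _ => by simp only [map_add, finsum_add_distrib (hf _ _) (hf _ _)])
    (fun c m n => by simp only [map_smul, smul_finsum' c (hf m n)])

/-- `1 ⊗ d/dt` on `ℤ →₀ V ≅ V ⊗ ℂ[t, t⁻¹]`. -/
def laurentDeriv (V : Type*) [AddCommGroup V] [Module ℂ V] : (ℤ →₀ V) →ₗ[ℂ] (ℤ →₀ V) :=
  Finsupp.lsum ℂ fun n => (n : ℂ) • lsingle (n - 1)

@[simp] lemma laurentDeriv_single {V : Type*} [AddCommGroup V] [Module ℂ V] (n : ℤ) (v : V) :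
    laurentDeriv V (single n v) = (n : ℂ) • single (n - 1) v := by
  simp [laurentDeriv]

namespace VertexLie

variable (A : VertexLie U)

lemma eventually_mul_eq_zero (u v : U) : ∀ᶠ n in atTop, A.mul n u v = 0 :=
  eventually_atTop.2 (A.trunc u v)

lemma eventually_forall_mul_left_eq_zero {f : ℕ → U} (hf : ∀ᶠ j in atTop, f j = 0) (w : U) :
    ∀ᶠ i in atTop, ∀ j, A.mul i (f j) w = 0 := by
  obtain ⟨N, hN⟩ := eventually_atTop.1 hf
  filter_upwards [(eventually_all_finset (range N)).2 fun j _ => A.eventually_mul_eq_zero (f j) w]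
    with i hi j
  rcases lt_or_ge j N with hj | hj
  · exact hi j (mem_range.2 hj)
  · simp [hN j hj]

lemma eventually_forall_mul_right_eq_zero (u : U) {f : ℕ → U} (hf : ∀ᶠ j in atTop, f j = 0) :
    ∀ᶠ i in atTop, ∀ j, A.mul i u (f j) = 0 := by
  obtain ⟨N, hN⟩ := eventually_atTop.1 hf
  filter_upwards [(eventually_all_finset (range N)).2 fun j _ => A.eventually_mul_eq_zero u (f j)]
    with i hi j
  rcases lt_or_ge j N with hj | hj
  · exact hi j (mem_range.2 hj)
  · simp [hN j hj]

/-- The commutator formula: the case `k = 0` of the half Jacobi identity. -/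
lemma mul_mul_sub_mul_mul (u v w : U) (i j : ℕ) {N : ℕ} (hN : i < N) :
    A.mul i u (A.mul j v w) - A.mul j v (A.mul i u w)
      = ∑ s ∈ range N, (i.choose s : ℂ) • A.mul (i + j - s) (A.mul s u v) w := by
  have h := A.jacobi 0 i j u v w
  rw [finsum_eq_single _ 0 fun t ht => by simp [Nat.choose_eq_zero_of_lt (Nat.pos_of_ne_zero ht)],
    finsum_eq_sum_range (N := N) fun s hs => by simp [Nat.choose_eq_zero_of_lt (hN.trans_le hs)]]
    at h
  simpa using h

def bracketSingle (n p : ℤ) : U →ₗ[ℂ] U →ₗ[ℂ] (ℤ →₀ U) :=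
  LinearMap.finsum₂ (fun i => zbinom n i • (A.mul i).compr₂ (lsingle (n + p - i))) fun u v =>
    support_finite_of_eventually_eq_zero <| (A.eventually_mul_eq_zero u v).mono fun i hi => by
      simp [hi]

def bracket : (ℤ →₀ U) →ₗ[ℂ] (ℤ →₀ U) →ₗ[ℂ] (ℤ →₀ U) :=
  Finsupp.lsum ℂ fun n => (Finsupp.lsum ℂ fun p => (A.bracketSingle n p).flip).flip

lemma bProp_bracket : BProp A A.bracket := by
  intro n p u v
  simp [bracket, bracketSingle, LinearMap.finsum₂]

def liftD : (ℤ →₀ U) →ₗ[ℂ] (ℤ →₀ U) := Finsupp.mapRange.linearMap A.D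

def relOp : (ℤ →₀ U) →ₗ[ℂ] (ℤ →₀ U) := A.liftD + laurentDeriv U

@[simp] lemma liftD_single (n : ℤ) (u : U) : A.liftD (single n u) = single n (A.D u) := by
  simp [liftD]

lemma relOp_single (n : ℤ) (u : U) :
    A.relOp (single n u) = single n (A.D u) + (n : ℂ) • single (n - 1) u := by
  simp [relOp]

lemma relOp_mem_Ksub (x : ℤ →₀ U) : A.relOp x ∈ Ksub A := by
  induction x using Finsupp.induction_linear with
  | zero => simp
  | add x y hx hy => simpa using add_mem hx hy
  | single n u => exact Submodule.subset_span ⟨u, n, A.relOp_single n u⟩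

lemma Ksub_le_of_relOp_single_mem {P : Submodule ℂ (ℤ →₀ U)}
    (h : ∀ (n : ℤ) (u : U), A.relOp (single n u) ∈ P) : Ksub A ≤ P :=
  Submodule.span_le.2 fun _ ⟨u, n, hx⟩ => hx ▸ A.relOp_single n u ▸ h n u

lemma Ksub_le_comap_liftD : Ksub A ≤ (Ksub A).comap A.liftD :=
  A.Ksub_le_of_relOp_single_mem fun n u => by
    simpa [relOp_single] using A.relOp_mem_Ksub (single n (A.D u))

lemma mkQ_single_D (n : ℤ) (u : U) :
    (Ksub A).mkQ (single n (A.D u)) = (-(n : ℂ)) • (Ksub A).mkQ (single (n - 1) u) := by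
  have h := (Submodule.Quotient.mk_eq_zero _).2 (A.relOp_mem_Ksub (single n u))
  rw [relOp_single, Submodule.Quotient.mk_add, Submodule.Quotient.mk_smul] at h
  rw [Submodule.mkQ_apply, Submodule.mkQ_apply, eq_neg_of_add_eq_zero_left h, neg_smul]

lemma mkQ_single_D_pow (k : ℕ) (q : ℤ) (u : U) :
    (Ksub A).mkQ (single q ((A.D ^ k) u))
      = ((-1) ^ k * k.factorial * Ring.choose (q : ℂ) k) • (Ksub A).mkQ (single (q - k) u) := by
  induction k generalizing u with
  | zero => simp
  | succ k ih =>
    rw [pow_succ, Module.End.mul_apply, ih, mkQ_single_D, smul_smul,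
      show q - k - 1 = q - (k + 1 : ℕ) by push_cast; ring]
    congr 1
    have h := Ring.succ_mul_choose_succ (q : ℂ) k
    push_cast [Nat.factorial_succ]
    linear_combination (-1) ^ k * (k.factorial : ℂ) * h

lemma mkQ_single_mul_eq_neg_sum {u v : U} {R : ℕ} (hR : ∀ j ≥ R, A.mul j v u = 0) (i : ℕ)
    (q : ℤ) : (Ksub A).mkQ (single q (A.mul i u v)) = -∑ k ∈ range R,
      ((-1) ^ i * Ring.choose (q : ℂ) k) • (Ksub A).mkQ (single (q - k) (A.mul (i + k) v u)) := by
  rw [A.skew, finsum_eq_sum_range (N := R) fun k hk => by simp [hR (i + k) (by omega)],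
    Finsupp.single_neg, Finsupp.single_finsetSum, map_neg, map_sum]
  congr 1
  refine sum_congr rfl fun k _ => ?_
  rw [← Finsupp.smul_single, map_smul, mkQ_single_D_pow, smul_smul]
  congr 1
  have hk : (k.factorial : ℂ) ≠ 0 := Nat.cast_ne_zero.2 k.factorial_ne_zero
  have hsq : ((-1 : ℂ) ^ k) ^ 2 = 1 := by rw [← pow_mul, pow_mul', neg_one_sq, one_pow]
  field_simp
  linear_combination (-1) ^ i * Ring.choose (q : ℂ) k * hsq

end VertexLie

namespace BProp

variable {A : VertexLie U} {B : (ℤ →₀ U) →ₗ[ℂ] (ℤ →₀ U) →ₗ[ℂ] (ℤ →₀ U)}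

lemma apply_single_single (hB : BProp A B) {u v : U} {N : ℕ} (hN : ∀ i ≥ N, A.mul i u v = 0)
    (n p : ℤ) : B (single n u) (single p v)
      = ∑ i ∈ range N, Ring.choose (n : ℂ) i • single (n + p - i) (A.mul i u v) := by
  rw [hB, finsum_eq_sum_range (N := N) fun i hi => by simp [hN i hi]]
  simp_rw [zbinom_eq_choose]

lemma liftD_apply (hB : BProp A B) (x y : ℤ →₀ U) :
    A.liftD (B x y) = B (A.liftD x) y + B x (A.liftD y) := by
  suffices h : B.compr₂ A.liftD = B ∘ₗ A.liftD + B.compl₂ A.liftD from LinearMap.congr_fun₂ h x y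
  refine Finsupp.lhom_ext fun n u => Finsupp.lhom_ext fun p v => ?_
  obtain ⟨N, hN⟩ := eventually_atTop.1 <| (A.eventually_mul_eq_zero u v).and <|
    (A.eventually_mul_eq_zero (A.D u) v).and (A.eventually_mul_eq_zero u (A.D v))
  simp only [LinearMap.compr₂_apply, LinearMap.add_apply, LinearMap.comp_apply,
    LinearMap.compl₂_apply, A.liftD_single, hB.apply_single_single fun i hi => (hN i hi).1,
    hB.apply_single_single fun i hi => (hN i hi).2.1,
    hB.apply_single_single fun i hi => (hN i hi).2.2, map_sum, map_smul, ← sum_add_distrib,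
    ← smul_add, ← Finsupp.single_add, ← A.leibniz]

lemma laurentDeriv_apply (hB : BProp A B) (x y : ℤ →₀ U) :
    laurentDeriv U (B x y) = B (laurentDeriv U x) y + B x (laurentDeriv U y) := by
  suffices h : B.compr₂ (laurentDeriv U) = B ∘ₗ laurentDeriv U + B.compl₂ (laurentDeriv U) from
    LinearMap.congr_fun₂ h x y
  refine Finsupp.lhom_ext fun n u => Finsupp.lhom_ext fun p v => ?_
  obtain ⟨N, hN⟩ := eventually_atTop.1 (A.eventually_mul_eq_zero u v)
  simp only [LinearMap.compr₂_apply, LinearMap.add_apply, LinearMap.comp_apply,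
    LinearMap.compl₂_apply, laurentDeriv_single, map_smul, LinearMap.smul_apply,
    hB.apply_single_single hN, map_sum, smul_sum, ← sum_add_distrib, smul_smul]
  refine sum_congr rfl fun i _ => ?_
  rw [show n - 1 + p - i = n + p - i - 1 by ring, show n + (p - 1) - i = n + p - i - 1 by ring,
    ← add_smul]
  congr 1
  have h₁ := Ring.succ_mul_choose_succ (n : ℂ) i
  have h₂ := Ring.mul_choose_sub_one (n : ℂ) i
  push_cast
  linear_combination -h₁ - h₂

lemma apply_relOp_left (hB : BProp A B) (x y : ℤ →₀ U) : B (A.relOp x) y = 0 := by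
  suffices h : B ∘ₗ A.relOp = 0 from LinearMap.congr_fun₂ h x y
  refine Finsupp.lhom_ext fun n u => Finsupp.lhom_ext fun p v => ?_
  obtain ⟨N, hN⟩ := eventually_atTop.1 (A.eventually_mul_eq_zero u v)
  have hDN : ∀ i ≥ N + 1, A.mul i (A.D u) v = 0 := fun i hi => by
    obtain ⟨j, rfl⟩ : ∃ j, i = j + 1 := ⟨i - 1, by omega⟩
    rw [A.dLeft, hN j (by omega), smul_zero]
  simp only [LinearMap.comp_apply, LinearMap.zero_apply, A.relOp_single, map_add, map_smul,
    LinearMap.add_apply, LinearMap.smul_apply, hB.apply_single_single hDN,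
    hB.apply_single_single hN, sum_range_succ', A.dLeftZero, A.dLeft, Finsupp.single_zero,
    smul_zero, add_zero, smul_sum, ← sum_add_distrib]
  refine sum_eq_zero fun j _ => ?_
  rw [← Finsupp.smul_single, smul_smul, smul_smul,
    show n - 1 + p - j = n + p - (j + 1 : ℕ) by push_cast; ring, ← add_smul]
  have h := Ring.mul_choose_sub_one (n : ℂ) j
  rw [show Ring.choose (n : ℂ) (j + 1) * -((j : ℂ) + 1) + n * Ring.choose ((n - 1 : ℤ) : ℂ) j = 0
    by push_cast; linear_combination h, zero_smul]

lemma apply_relOp_right (hB : BProp A B) (x y : ℤ →₀ U) :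
    B x (A.relOp y) = A.relOp (B x y) := by
  have h := hB.apply_relOp_left x y
  simp only [VertexLie.relOp, LinearMap.add_apply, map_add, hB.liftD_apply,
    hB.laurentDeriv_apply] at h ⊢
  rw [← sub_eq_zero, ← neg_eq_zero, ← h]
  abel

lemma Ksub_le_ker (hB : BProp A B) : Ksub A ≤ LinearMap.ker (B.compr₂ (Ksub A).mkQ) :=
  A.Ksub_le_of_relOp_single_mem fun _ _ => LinearMap.ext fun _ => by
    simp [hB.apply_relOp_left]

lemma Ksub_le_ker_flip (hB : BProp A B) :
    Ksub A ≤ LinearMap.ker (B.compr₂ (Ksub A).mkQ).flip :=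
  A.Ksub_le_of_relOp_single_mem fun _ _ => LinearMap.ext fun x => by
    simpa [hB.apply_relOp_right, Submodule.Quotient.mk_eq_zero] using A.relOp_mem_Ksub (B x _)

lemma mkQ_apply_single_add_swap (hB : BProp A B) (n p : ℤ) (u v : U) :
    (Ksub A).mkQ (B (single n u) (single p v) + B (single p v) (single n u)) = 0 := by
  obtain ⟨R, hR⟩ := eventually_atTop.1 <|
    (A.eventually_mul_eq_zero u v).and (A.eventually_mul_eq_zero v u)
  have hvu : ∀ i ≥ R, A.mul i v u = 0 := fun i hi => (hR i hi).2
  set H : ℕ → (ℤ →₀ U) ⧸ Ksub A := fun m => (Ksub A).mkQ (single (n + p - m) (A.mul m v u))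
  have hH : ∀ m ≥ R, H m = 0 := fun m hm => by simp [H, hvu m hm]
  have hcoef : ∀ m, Ring.choose (p : ℂ) m = ∑ i ∈ range (m + 1),
      Ring.choose (n : ℂ) i * ((-1) ^ i * Ring.choose ((n + p - i : ℤ) : ℂ) (m - i)) := fun m => by
    rw [← Ring.sum_range_neg_one_pow_mul_choose_mul_choose (n : ℂ) p]
    exact sum_congr rfl fun i _ => by push_cast; ring
  have huv_eq : (Ksub A).mkQ (B (single n u) (single p v))
      = -∑ m ∈ range R, Ring.choose (p : ℂ) m • H m := by
    rw [hB.apply_single_single fun i hi => (hR i hi).1, map_sum]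
    simp_rw [map_smul, A.mkQ_single_mul_eq_neg_sum hvu, smul_neg, smul_sum, smul_smul,
      sum_neg_distrib, hcoef]
    rw [← sum_range_sum_range_smul_add_eq (fun i k =>
      Ring.choose (n : ℂ) i * ((-1) ^ i * Ring.choose ((n + p - i : ℤ) : ℂ) k)) hH]
    refine congrArg _ (sum_congr rfl fun i _ => sum_congr rfl fun k _ => ?_)
    simp only [H, Nat.cast_add, sub_sub]
  have hvu_eq : (Ksub A).mkQ (B (single p v) (single n u))
      = ∑ m ∈ range R, Ring.choose (p : ℂ) m • H m := by
    rw [hB.apply_single_single hvu, map_sum]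
    simp only [map_smul, H, add_comm p n]
  rw [map_add, huv_eq, hvu_eq, neg_add_cancel]

lemma mkQ_apply_add_swap (hB : BProp A B) (x y : ℤ →₀ U) :
    (Ksub A).mkQ (B x y + B y x) = 0 := by
  suffices h : B.compr₂ (Ksub A).mkQ + B.flip.compr₂ (Ksub A).mkQ = 0 by
    simpa using LinearMap.congr_fun₂ h x y
  exact Finsupp.lhom_ext fun n u => Finsupp.lhom_ext fun p v => by
    simpa using hB.mkQ_apply_single_add_swap n p u v

lemma jacobi_single (hB : BProp A B) (a b c : ℤ) (u v w : U) :
    B (single a u) (B (single b v) (single c w)) - B (single b v) (B (single a u) (single c w))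
      = B (B (single a u) (single b v)) (single c w) := by
  obtain ⟨R, hR⟩ := eventually_atTop.1 <| (A.eventually_mul_eq_zero u v).and <|
    (A.eventually_mul_eq_zero v w).and <| (A.eventually_mul_eq_zero u w).and <|
    (A.eventually_forall_mul_right_eq_zero u (A.eventually_mul_eq_zero v w)).and <|
    (A.eventually_forall_mul_right_eq_zero v (A.eventually_mul_eq_zero u w)).and <|
    A.eventually_forall_mul_left_eq_zero (A.eventually_mul_eq_zero u v) w
  have huv : ∀ s ≥ R, A.mul s u v = 0 := fun s hs => (hR s hs).1
  have hvw : ∀ j ≥ R, A.mul j v w = 0 := fun j hj => (hR j hj).2.1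
  have huw : ∀ i ≥ 2 * R, A.mul i u w = 0 := fun i hi => (hR i (by omega)).2.2.1
  have hu_vw : ∀ j, ∀ i ≥ 2 * R, A.mul i u (A.mul j v w) = 0 := fun j i hi =>
    (hR i (by omega)).2.2.2.1 j
  have hv_uw : ∀ i, ∀ j ≥ R, A.mul j v (A.mul i u w) = 0 := fun i j hj => (hR j hj).2.2.2.2.1 i
  have huv_w : ∀ s, ∀ m ≥ R, A.mul m (A.mul s u v) w = 0 := fun s m hm => (hR m hm).2.2.2.2.2 s
  set Y : ℕ → ℕ → (ℤ →₀ U) := fun s m => single (a + b + c - s - m) (A.mul m (A.mul s u v) w)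
  have hterm : ∀ i ∈ range (2 * R), ∀ j ∈ range R,
      (Ring.choose (a : ℂ) i * Ring.choose (b : ℂ) j) •
        single (a + b + c - i - j) (A.mul i u (A.mul j v w) - A.mul j v (A.mul i u w))
      = ∑ s ∈ range R,
        (Ring.choose (a : ℂ) i * (i.choose s : ℂ) * Ring.choose (b : ℂ) j) • Y s (i + j - s) := by
    intro i hi j _
    rw [A.mul_mul_sub_mul_mul u v w i j (mem_range.1 hi), eventually_constant_sum
      (fun s hs => by rw [huv s hs, map_zero, LinearMap.zero_apply, smul_zero])
      (by simp at hi; omega), Finsupp.single_finsetSum, smul_sum]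
    refine sum_congr rfl fun s _ => ?_
    rcases le_or_gt s i with hsi | hsi
    · have hidx : a + b + c - i - j = a + b + c - s - ((i + j - s : ℕ) : ℤ) := by
        push_cast [Nat.cast_sub (by omega : s ≤ i + j)]; ring
      rw [← Finsupp.smul_single, smul_smul, hidx, mul_right_comm]
    · simp [Nat.choose_eq_zero_of_lt hsi]
  have hLHS : B (single a u) (B (single b v) (single c w))
        - B (single b v) (B (single a u) (single c w))
      = ∑ s ∈ range R, ∑ i ∈ range (2 * R), ∑ j ∈ range R,
          (Ring.choose (a : ℂ) i * (i.choose s : ℂ) * Ring.choose (b : ℂ) j) • Y s (i + j - s) := by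
    rw [hB.apply_single_single hvw, hB.apply_single_single huw, map_sum, map_sum]
    simp only [map_smul, hB.apply_single_single (hu_vw _), hB.apply_single_single (hv_uw _),
      smul_sum, smul_smul]
    rw [sum_comm, ← sum_sub_distrib]
    refine (sum_congr rfl fun i hi => ?_).trans
      ((sum_congr rfl fun i _ => sum_comm).trans sum_comm)
    rw [← sum_sub_distrib]
    refine sum_congr rfl fun j hj => ?_
    rw [← hterm i hi j hj, Finsupp.single_sub, smul_sub, mul_comm (Ring.choose (b : ℂ) j),
      show a + (b + c - j) - i = a + b + c - i - j by ring,
      show b + (a + c - i) - j = a + b + c - i - j by ring]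
  have hRHS : B (B (single a u) (single b v)) (single c w)
      = ∑ s ∈ range R, Ring.choose (a : ℂ) s •
          ∑ m ∈ range R, Ring.choose (a + b - s : ℂ) m • Y s m := by
    rw [hB.apply_single_single huv, map_sum, LinearMap.sum_apply]
    refine sum_congr rfl fun s _ => ?_
    rw [map_smul, LinearMap.smul_apply, hB.apply_single_single (huv_w s)]
    push_cast
    simp only [Y, add_sub_right_comm _ (c : ℤ)]
  rw [hLHS, hRHS]
  refine sum_congr rfl fun s hs => sum_range_choose_mul_choose_smul_sub _ _
    (by simp at hs; omega) fun m hm => by simp [Y, huv_w s m hm]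

lemma jacobi (hB : BProp A B) (x y z : ℤ →₀ U) :
    B x (B y z) - B y (B x z) = B (B x y) z := by
  induction x using Finsupp.induction_linear with
  | zero => simp
  | add x₁ x₂ h₁ h₂ => simp only [map_add, LinearMap.add_apply, ← h₁, ← h₂]; abel
  | single a u =>
    induction y using Finsupp.induction_linear with
    | zero => simp
    | add y₁ y₂ h₁ h₂ => simp only [map_add, LinearMap.add_apply, ← h₁, ← h₂]; abel
    | single b v =>
      suffices h : B (single a u) ∘ₗ B (single b v) - B (single b v) ∘ₗ B (single a u)
          = B (B (single a u) (single b v)) from LinearMap.congr_fun h z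
      exact Finsupp.lhom_ext fun c w => hB.jacobi_single a b c u v w

end BProp

/-- the bilinear map `B` on `M(U)` determined by
`B(uₙ, v_p) = Σ_{i≥0} binom(n,i)·(u_iv)_{n+p−i}` exists; it maps `K(U)` into `K(U)`
in each variable, hence descends to `L(U) = M(U)/K(U)`, where the induced bracket
makes `L(U)` a Lie algebra; moreover `(Du)ₙ = −n·u_{n−1}` holds in `L(U)`, and
`uₙ ↦ (Du)ₙ` is a well-defined derivation of this Lie algebra. -/
theorem stmt1 (A : VertexLie U) :
    (∃ B : (ℤ →₀ U) →ₗ[ℂ] (ℤ →₀ U) →ₗ[ℂ] (ℤ →₀ U), BProp A B) ∧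
    ∀ B : (ℤ →₀ U) →ₗ[ℂ] (ℤ →₀ U) →ₗ[ℂ] (ℤ →₀ U), BProp A B →
      (∀ x ∈ Ksub A, ∀ y : ℤ →₀ U, B x y ∈ Ksub A) ∧
      (∀ x : ℤ →₀ U, ∀ y ∈ Ksub A, B x y ∈ Ksub A) ∧
      ∃ Bq : ((ℤ →₀ U) ⧸ Ksub A) →ₗ[ℂ] ((ℤ →₀ U) ⧸ Ksub A) →ₗ[ℂ] ((ℤ →₀ U) ⧸ Ksub A),
        (∀ x y : ℤ →₀ U, Bq ((Ksub A).mkQ x) ((Ksub A).mkQ y) = (Ksub A).mkQ (B x y)) ∧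
        (∀ a, Bq a a = 0) ∧
        (∀ a b c, Bq a (Bq b c) - Bq b (Bq a c) = Bq (Bq a b) c) ∧
        (∀ (u : U) (n : ℤ),
          (Ksub A).mkQ (Finsupp.single n (A.D u))
            = (-(n : ℂ)) • (Ksub A).mkQ (Finsupp.single (n - 1) u)) ∧
        ∃ Dq : ((ℤ →₀ U) ⧸ Ksub A) →ₗ[ℂ] ((ℤ →₀ U) ⧸ Ksub A),
          (∀ (u : U) (n : ℤ),
            Dq ((Ksub A).mkQ (Finsupp.single n u)) = (Ksub A).mkQ (Finsupp.single n (A.D u))) ∧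
          (∀ a b, Dq (Bq a b) = Bq (Dq a) b + Bq a (Dq b)) := by
  refine ⟨⟨A.bracket, A.bProp_bracket⟩, fun B hB => ?_⟩
  let Bq := (B.compr₂ (Ksub A).mkQ).liftQ₂ (Ksub A) (Ksub A) hB.Ksub_le_ker hB.Ksub_le_ker_flip
  let Dq := (Ksub A).mapQ (Ksub A) A.liftD A.Ksub_le_comap_liftD
  refine ⟨fun x hx y => ?_, fun x y hy => ?_, Bq, fun _ _ => rfl, ?_, ?_,
    fun u n => A.mkQ_single_D n u, Dq, fun u n => congrArg _ (A.liftD_single n u), ?_⟩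
  · exact (Submodule.Quotient.mk_eq_zero _).1 (LinearMap.congr_fun (hB.Ksub_le_ker hx) y)
  · exact (Submodule.Quotient.mk_eq_zero _).1 (LinearMap.congr_fun (hB.Ksub_le_ker_flip hy) x)
  · rintro ⟨x⟩
    have h := hB.mkQ_apply_add_swap x x
    rw [← two_smul ℂ, map_smul, smul_eq_zero] at h
    exact h.resolve_left two_ne_zero
  · rintro ⟨x⟩ ⟨y⟩ ⟨z⟩
    exact congrArg (Ksub A).mkQ (hB.jacobi x y z)
  · rintro ⟨x⟩ ⟨y⟩
    exact congrArg (Ksub A).mkQ (hB.liftD_apply x y)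

end
end

section
/- Let S be a formula over ℂ. Then the products Fₙ extend uniquely to bilinear maps (A,B) ↦ AₙB on ℂ[D]⊗S, one for each n ∈ ℕ, such that AₙB = Fₙ(A,B) for A,B ∈ S, and (DA)ₙB = −n·A_{n−1}B for n ≥ 1, (DA)₀B = 0, and D(AₙB) = (DA)ₙB + Aₙ(DB) for all A,B ∈ ℂ[D]⊗S and n ∈ ℕ. Moreover, for all A,B ∈ ℂ[D]⊗S one has AₙB = 0 for n sufficiently large. -/
/-!
The rules force the extension on the spanning vectors `D^j ⊗ u`, `D^k ⊗ v`: the rule for `D` on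
the left gives `(D^j u)_n B = (-1)^j n (n-1) ⋯ (n-j+1) u_{n-j} B`, and the Leibniz rule then gives
`u_m (D^{k+1} v) = D(u_m D^k v) + m u_{m-1} D^k v`. This proves uniqueness, and taking these
formulas as the definition, the rules reduce to identities between the coefficients. Since
`u_m D^k v` is built from the `F_{m-i}(u, v)` with `i ≤ k`, it vanishes for `m` large.
-/

open scoped BigOperators

noncomputable section

variable {S : Type*} [AddCommGroup S] [Module ℂ S]

/-- The operator `D` on `ℂ[D]⊗S` (realized as `ℕ →₀ S`, where `Finsupp.single k u`
stands for `D^k ⊗ u`): it sends `D^k ⊗ u` to `D^{k+1} ⊗ u`. -/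
def Dop (S : Type*) [AddCommGroup S] [Module ℂ S] : (ℕ →₀ S) →ₗ[ℂ] (ℕ →₀ S) :=
  Finsupp.lmapDomain S ℂ (fun k => k + 1)

/-- A formula over `ℂ`: a vector space `S` with bilinear maps
`Fₙ : S × S → ℂ[D]⊗S` (`n : ℕ`), vanishing for `n` sufficiently large. -/
structure Formula (S : Type*) [AddCommGroup S] [Module ℂ S] where
  F : ℕ → S →ₗ[ℂ] S →ₗ[ℂ] (ℕ →₀ S)
  trunc : ∀ u v : S, ∃ N : ℕ, ∀ n : ℕ, N ≤ n → F n u v = 0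

/-- The defining properties of the extension of the products of a formula `S`
to `ℂ[D]⊗S`: it agrees with `Fₙ` on `S`, and satisfies `(DA)ₙB = −n·A_{n−1}B`,
`(DA)₀B = 0` and `D(AₙB) = (DA)ₙB + Aₙ(DB)`. -/
def ExtProp (A : Formula S)
    (M : ℕ → (ℕ →₀ S) →ₗ[ℂ] (ℕ →₀ S) →ₗ[ℂ] (ℕ →₀ S)) : Prop :=
  (∀ (n : ℕ) (u v : S), M n (Finsupp.single 0 u) (Finsupp.single 0 v) = A.F n u v) ∧
  (∀ (n : ℕ) (x y : ℕ →₀ S), M (n + 1) (Dop S x) y = (-((n : ℂ) + 1)) • M n x y) ∧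
  (∀ x y : ℕ →₀ S, M 0 (Dop S x) y = 0) ∧
  (∀ (n : ℕ) (x y : ℕ →₀ S),
    Dop S (M n x y) = M n (Dop S x) y + M n x (Dop S y))

open Filter

lemma Dop_single (j : ℕ) (u : S) :
    Dop S (Finsupp.single j u) = Finsupp.single (j + 1) u := by
  simp [Dop, Finsupp.mapDomain_single]

namespace Finsupp

variable {ι R M N P : Type*} [CommSemiring R] [AddCommMonoid M] [Module R M]
  [AddCommMonoid N] [Module R N] [AddCommMonoid P] [Module R P]

def lift₂ (B : ι → ι → M →ₗ[R] N →ₗ[R] P) : (ι →₀ M) →ₗ[R] (ι →₀ N) →ₗ[R] P :=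
  lsum R fun i => (lsum R : (ι → N →ₗ[R] P) ≃ₗ[R] ((ι →₀ N) →ₗ[R] P)).toLinearMap ∘ₗ
    LinearMap.pi (B i)

@[simp]
lemma lift₂_single (B : ι → ι → M →ₗ[R] N →ₗ[R] P) (i j : ι) (m : M) (n : N) :
    lift₂ B (single i m) (single j n) = B i j m n := by
  simp [lift₂]

lemma bilin_ext {f g : (ι →₀ M) →ₗ[R] (ι →₀ N) →ₗ[R] P}
    (h : ∀ i m j n, f (single i m) (single j n) = g (single i m) (single j n)) : f = g :=
  lhom_ext fun i m => lhom_ext fun j n => h i m j n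

lemma eventually_bilin_eq_zero {α : Type*} {l : Filter α}
    {f : α → (ι →₀ M) →ₗ[R] (ι →₀ N) →ₗ[R] P}
    (h : ∀ i m j n, ∀ᶠ a in l, f a (single i m) (single j n) = 0) (x : ι →₀ M) (y : ι →₀ N) :
    ∀ᶠ a in l, f a x y = 0 := by
  induction x using induction_linear with
  | zero => simp
  | add x x' hx hx' => filter_upwards [hx, hx'] with a h h' using by simp [h, h']
  | single i m =>
    induction y using induction_linear with
    | zero => simp
    | add y y' hy hy' => filter_upwards [hy, hy'] with a h h' using by simp [h, h']
    | single j n => exact h i m j n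

end Finsupp

namespace Formula

variable (A : Formula S)

/-- `(u, v) ↦ u_m (D^k v)`. The recursion is the Leibniz rule `D(u_m w) = (Du)_m w + u_m (Dw)`
together with `(Du)_m w = -m u_{m-1} w`. -/
def prodDPow : ℕ → ℕ → S →ₗ[ℂ] S →ₗ[ℂ] (ℕ →₀ S)
  | m, 0 => A.F m
  | m, k + 1 => (prodDPow m k).compr₂ (Dop S) + (m : ℂ) • prodDPow (m - 1) k

lemma prodDPow_succ_apply (m k : ℕ) (u v : S) :
    A.prodDPow m (k + 1) u v = Dop S (A.prodDPow m k u v) + (m : ℂ) • A.prodDPow (m - 1) k u v :=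
  rfl

lemma eventually_prodDPow_eq_zero (k : ℕ) (u v : S) :
    ∀ᶠ m in atTop, A.prodDPow m k u v = 0 := by
  induction k with
  | zero =>
    obtain ⟨N, hN⟩ := A.trunc u v
    exact eventually_atTop.mpr ⟨N, hN⟩
  | succ k ih =>
    filter_upwards [ih, (tendsto_sub_atTop_nat 1).eventually ih] with m h h'
    simp [prodDPow_succ_apply, h, h']

/-- The coefficient in `(D^j u)_n = (-1)^j n (n-1) ⋯ (n-j+1) u_{n-j}`. It vanishes for `j > n`,
which makes the truncated subtraction `n - j` harmless. -/
def leftCoeff (n j : ℕ) : ℂ := (-1) ^ j * n.descFactorial j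

lemma leftCoeff_succ_succ (n j : ℕ) :
    leftCoeff (n + 1) (j + 1) = -((n : ℂ) + 1) * leftCoeff n j := by
  simp only [leftCoeff, Nat.succ_descFactorial_succ]
  push_cast
  ring

lemma leftCoeff_zero_succ (j : ℕ) : leftCoeff 0 (j + 1) = 0 := by
  simp [leftCoeff]

lemma leftCoeff_succ (n j : ℕ) : leftCoeff n (j + 1) = -((n - j : ℕ) : ℂ) * leftCoeff n j := by
  simp only [leftCoeff, Nat.descFactorial_succ]
  push_cast
  ring

def extProd (n : ℕ) : (ℕ →₀ S) →ₗ[ℂ] (ℕ →₀ S) →ₗ[ℂ] (ℕ →₀ S) :=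
  Finsupp.lift₂ fun j k => leftCoeff n j • A.prodDPow (n - j) k

lemma extProd_single (n j k : ℕ) (u v : S) :
    A.extProd n (Finsupp.single j u) (Finsupp.single k v)
      = leftCoeff n j • A.prodDPow (n - j) k u v := by
  simp [extProd]

lemma extProd_Dop_succ (n : ℕ) (x y : ℕ →₀ S) :
    A.extProd (n + 1) (Dop S x) y = (-((n : ℂ) + 1)) • A.extProd n x y := by
  suffices h : A.extProd (n + 1) ∘ₗ Dop S = (-((n : ℂ) + 1)) • A.extProd n from
    LinearMap.congr_fun₂ h x y
  refine Finsupp.bilin_ext fun j u k v => ?_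
  simp [Dop_single, extProd_single, leftCoeff_succ_succ, mul_smul]

lemma extProd_Dop_zero (x y : ℕ →₀ S) : A.extProd 0 (Dop S x) y = 0 := by
  suffices h : A.extProd 0 ∘ₗ Dop S = 0 from LinearMap.congr_fun₂ h x y
  refine Finsupp.bilin_ext fun j u k v => ?_
  simp [Dop_single, extProd_single, leftCoeff_zero_succ]

lemma Dop_extProd (n : ℕ) (x y : ℕ →₀ S) :
    Dop S (A.extProd n x y) = A.extProd n (Dop S x) y + A.extProd n x (Dop S y) := by
  suffices h : (A.extProd n).compr₂ (Dop S)
      = A.extProd n ∘ₗ Dop S + (A.extProd n).compl₂ (Dop S) from LinearMap.congr_fun₂ h x y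
  refine Finsupp.bilin_ext fun j u k v => ?_
  simp only [LinearMap.compr₂_apply, LinearMap.add_apply, LinearMap.comp_apply,
    LinearMap.compl₂_apply, Dop_single, extProd_single, prodDPow_succ_apply, leftCoeff_succ,
    map_smul, smul_add, ← Nat.sub_sub]
  module

lemma extProp_extProd : ExtProp A A.extProd :=
  ⟨fun n u v => by simp [extProd_single, leftCoeff, prodDPow],
    A.extProd_Dop_succ, A.extProd_Dop_zero, A.Dop_extProd⟩

lemma eventually_extProd_eq_zero (x y : ℕ →₀ S) : ∀ᶠ n in atTop, A.extProd n x y = 0 := by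
  refine Finsupp.eventually_bilin_eq_zero (fun j u k v => ?_) x y
  filter_upwards [(tendsto_sub_atTop_nat j).eventually (A.eventually_prodDPow_eq_zero k u v)]
    with n h
  simp [extProd_single, h]

end Formula

namespace ExtProp

variable {A : Formula S} {M : ℕ → (ℕ →₀ S) →ₗ[ℂ] (ℕ →₀ S) →ₗ[ℂ] (ℕ →₀ S)}

lemma apply_single_succ_right (hM : ExtProp A M) (n j k : ℕ) (u v : S) :
    M n (Finsupp.single j u) (Finsupp.single (k + 1) v)
      = Dop S (M n (Finsupp.single j u) (Finsupp.single k v))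
        - M n (Finsupp.single (j + 1) u) (Finsupp.single k v) := by
  rw [hM.2.2.2, Dop_single, Dop_single, add_sub_cancel_left]

lemma unique {M' : ℕ → (ℕ →₀ S) →ₗ[ℂ] (ℕ →₀ S) →ₗ[ℂ] (ℕ →₀ S)}
    (hM : ExtProp A M) (hM' : ExtProp A M') : M = M' := by
  suffices h : ∀ k n j (u v : S), M n (Finsupp.single j u) (Finsupp.single k v)
      = M' n (Finsupp.single j u) (Finsupp.single k v) from
    funext fun n => Finsupp.bilin_ext fun j u k v => h k n j u v
  intro k
  induction k with
  | zero =>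
    intro n j
    induction j generalizing n with
    | zero => intro u v; rw [hM.1, hM'.1]
    | succ j ih =>
      intro u v
      rw [← Dop_single]
      cases n with
      | zero => rw [hM.2.2.1, hM'.2.2.1]
      | succ n => rw [hM.2.1, hM'.2.1, ih]
  | succ k ih =>
    intro n j u v
    rw [hM.apply_single_succ_right, hM'.apply_single_succ_right, ih, ih]

end ExtProp

/-- for a formula `S`, the products `Fₙ` extend uniquely to bilinear maps
on `ℂ[D]⊗S` compatible with `D` as above; moreover, for the extension, `AₙB = 0` for
`n` sufficiently large. -/
theorem stmt13 (A : Formula S) :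
    (∃! M : ℕ → (ℕ →₀ S) →ₗ[ℂ] (ℕ →₀ S) →ₗ[ℂ] (ℕ →₀ S), ExtProp A M) ∧
    ∀ M : ℕ → (ℕ →₀ S) →ₗ[ℂ] (ℕ →₀ S) →ₗ[ℂ] (ℕ →₀ S), ExtProp A M →
      ∀ x y : ℕ →₀ S, ∃ N : ℕ, ∀ n : ℕ, N ≤ n → M n x y = 0 := by
  refine ⟨⟨A.extProd, A.extProp_extProd, fun M hM => hM.unique A.extProp_extProd⟩, ?_⟩
  intro M hM x y
  rw [hM.unique A.extProp_extProd]
  exact eventually_atTop.mp (A.eventually_extProd_eq_zero x y)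

end
end

section
/- Let S be a formula over ℂ such that uₙv ∈ S for all u,v ∈ S and n ∈ ℕ (i.e. Fₙᵏ(u,v) = 0 for all k ≥ 1). Then ℂ[D]⊗S, with the unique extension of the products, is a vertex Lie algebra (i.e. satisfies the half skew symmetry and the half Jacobi identity for all of its elements) if and only if Fₙ = 0 for all n ≥ 1 and F₀ is a Lie algebra bracket on S, i.e. F₀(u,v) = −F₀(v,u) and F₀(u,F₀(v,w)) − F₀(v,F₀(u,w)) = F₀(F₀(u,v),w) for all u,v,w ∈ S. -/
open scoped BigOperators

noncomputable section

variable {S : Type*} [AddCommGroup S] [Module ℂ S]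

/-- The half skew symmetry for the extended products on `ℂ[D]⊗S`. -/
def HalfSkew (M : ℕ → (ℕ →₀ S) →ₗ[ℂ] (ℕ →₀ S) →ₗ[ℂ] (ℕ →₀ S)) : Prop :=
  ∀ (n : ℕ) (x y : ℕ →₀ S),
    M n x y =
      -∑ᶠ k : ℕ, (((-1 : ℂ) ^ (n + k)) / (Nat.factorial k : ℂ)) •
        ((Dop S ^ k) (M (n + k) y x))

/-- The half Jacobi identity for the extended products on `ℂ[D]⊗S`. -/
def HalfJacobi (M : ℕ → (ℕ →₀ S) →ₗ[ℂ] (ℕ →₀ S) →ₗ[ℂ] (ℕ →₀ S)) : Prop :=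
  ∀ (k m n : ℕ) (x y z : ℕ →₀ S),
    ∑ᶠ i : ℕ, ((-1 : ℂ) ^ i * (Nat.choose k i : ℂ)) •
        (M (m + k - i) x (M (n + i) y z)
          - ((-1 : ℂ) ^ k) • M (n + k - i) y (M (m + i) x z))
      = ∑ᶠ i : ℕ, ((Nat.choose m i : ℂ)) • M (m + n - i) (M (k + i) x y) z

namespace Stmt15aux

open Finset

/-- Nat Lemma A : `(l+1)_{t+1} = l_{t+1} + (t+1)·l_t`. -/
lemma descFactorial_succ_left (l t : ℕ) :
    (l + 1).descFactorial (t + 1) = l.descFactorial (t + 1) + (t + 1) * l.descFactorial t := by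
  rcases le_or_gt t l with h | h
  · rw [Nat.succ_descFactorial_succ, Nat.descFactorial_succ]
    have : l + 1 = (l - t) + (t + 1) := by omega
    rw [this, add_mul]
  · rw [Nat.descFactorial_eq_zero_iff_lt.2 h, Nat.descFactorial_eq_zero_iff_lt.2 (by omega),
      Nat.descFactorial_eq_zero_iff_lt.2 (by omega)]
    simp

/-- `p_{q+1} = p · (p-1)_q` (with truncated subtraction). -/
lemma descFactorial_succ_mid (p q : ℕ) :
    p.descFactorial (q + 1) = p * (p - 1).descFactorial q := by
  cases p with
  | zero => simp
  | succ p => simpa using Nat.succ_descFactorial_succ p q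

/-- N1 : `p_q · (l+1)_{p-q} = p_q · l_{p-q} + p · (p-1)_q · l_{(p-1)-q}`. -/
lemma descFactorial_N1 (p q l : ℕ) :
    p.descFactorial q * (l + 1).descFactorial (p - q) =
      p.descFactorial q * l.descFactorial (p - q)
        + p * (p - 1).descFactorial q * l.descFactorial (p - 1 - q) := by
  rcases Nat.lt_or_ge q p with h | h
  · have hpq : p - q = (p - 1 - q) + 1 := by omega
    rw [hpq, descFactorial_succ_left, Nat.mul_add]
    congr 1
    have key : p.descFactorial q * (p - 1 - q + 1) = p * (p - 1).descFactorial q := by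
      have h1 : p - 1 - q + 1 = p - q := by omega
      rw [h1, mul_comm, ← Nat.descFactorial_succ, descFactorial_succ_mid]
    calc p.descFactorial q * ((p - 1 - q + 1) * l.descFactorial (p - 1 - q))
        = (p.descFactorial q * (p - 1 - q + 1)) * l.descFactorial (p - 1 - q) := by ring
      _ = _ := by rw [key]
  · -- q ≥ p : p - q = 0
    have h0 : p - q = 0 := by omega
    rw [h0]
    rcases Nat.eq_zero_or_pos p with rfl | hp
    · simp
    · have : (p - 1).descFactorial q = 0 := Nat.descFactorial_eq_zero_iff_lt.2 (by omega)
      simp [this]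

/-- cast descending factorial -/
def dsc (p q : ℕ) : ℂ := (p.descFactorial q : ℂ)

/-- the structure-constant scalar: `(D^j u)_n (D^l v) = cc n j l · D^{j+l-n}[u,v]`. -/
def cc (n j l : ℕ) : ℂ := (-1 : ℂ) ^ j * dsc n j * dsc l (n - j)

lemma dsc_eq_zero {p q : ℕ} (h : p < q) : dsc p q = 0 := by
  simp [dsc, Nat.descFactorial_eq_zero_iff_lt.2 h]

lemma cc_eq_zero_of_lt {n j l : ℕ} (h : j + l < n) : cc n j l = 0 := by
  rcases Nat.lt_or_ge n j with h2 | h2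
  · simp [cc, dsc_eq_zero h2]
  · have : l < n - j := by omega
    simp [cc, dsc_eq_zero this]

lemma cc_ne_zero_bounds {n j l : ℕ} (h : cc n j l ≠ 0) : j ≤ n ∧ n ≤ j + l := by
  by_contra hc
  rcases Nat.lt_or_ge n j with h2 | h2
  · exact h (by simp [cc, dsc_eq_zero h2])
  · have : l < n - j := by omega
    exact h (by simp [cc, dsc_eq_zero this])

/-- H1 : `cc p (q+1) l = -p · cc (p-1) q l`. -/
lemma cc_succ_mid (p q l : ℕ) : cc p (q + 1) l = -(p : ℂ) * cc (p - 1) q l := by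
  have hsub : p - (q + 1) = p - 1 - q := by omega
  simp only [cc, hsub, dsc, descFactorial_succ_mid p q, pow_succ, Nat.cast_mul]
  ring

/-- H1' : `cc (p+1) (q+1) l = -(p+1) · cc p q l`. -/
lemma cc_succ_succ (p q l : ℕ) : cc (p + 1) (q + 1) l = -((p : ℂ) + 1) * cc p q l := by
  have := cc_succ_mid (p + 1) q l
  simpa using this

/-- H2 : `cc p q (l+1) = cc p q l + p · cc (p-1) q l`. -/
lemma cc_succ_right (p q l : ℕ) : cc p q (l + 1) = cc p q l + (p : ℂ) * cc (p - 1) q l := by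
  have hsub : p - 1 - q = p - 1 - q := rfl
  have := congrArg (fun x : ℕ => ((x : ℂ))) (descFactorial_N1 p q l)
  push_cast at this
  simp only [cc, dsc]
  calc (-1:ℂ)^q * (p.descFactorial q : ℂ) * ((l+1).descFactorial (p - q) : ℂ)
      = (-1:ℂ)^q * ((p.descFactorial q : ℂ) * ((l+1).descFactorial (p - q) : ℂ)) := by ring
    _ = (-1:ℂ)^q * ((p.descFactorial q : ℂ) * (l.descFactorial (p - q) : ℂ)
          + (p : ℂ) * ((p-1).descFactorial q : ℂ) * (l.descFactorial (p - 1 - q) : ℂ)) := by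
          rw [this]
    _ = _ := by ring

/-- D-derivation coefficient identity: `cc n (j+1) l + cc n j (l+1) = cc n j l`. -/
lemma cc_deriv (n j l : ℕ) : cc n (j + 1) l + cc n j (l + 1) = cc n j l := by
  rw [cc_succ_mid, cc_succ_right]; ring

/-- cast of `(k-i)·C(k,i) = k·C(k-1,i)`. -/
lemma chooseN1 (k i : ℕ) : (k - i) * k.choose i = k * (k - 1).choose i := by
  cases k with
  | zero => simp
  | succ s =>
    simp only [Nat.succ_sub_one]
    calc (s + 1 - i) * (s + 1).choose i = (s + 1).choose i * (s + 1 - i) := Nat.mul_comm _ _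
      _ = (s + 1).choose (i + 1) * (i + 1) := (Nat.choose_succ_right_eq (s + 1) i).symm
      _ = (s + 1) * s.choose i := by
          have h2 := Nat.add_one_mul_choose_eq s i
          simpa [Nat.succ_eq_add_one, Nat.mul_comm] using h2.symm

lemma chooseC1 (k i : ℕ) :
    ((k - i : ℕ) : ℂ) * (k.choose i : ℂ) = (k : ℂ) * ((k - 1).choose i : ℂ) := by
  exact_mod_cast congrArg (fun x : ℕ => (x : ℂ)) (chooseN1 k i)

/-- cast of `(i+1)·C(k,i+1) = k·C(k-1,i)`. -/
lemma chooseN2 (k i : ℕ) : (i + 1) * k.choose (i + 1) = k * (k - 1).choose i := by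
  cases k with
  | zero => simp
  | succ s =>
    simp only [Nat.succ_sub_one]
    rw [Nat.mul_comm]
    exact (Nat.add_one_mul_choose_eq s i).symm

lemma chooseC2 (k i : ℕ) :
    ((i : ℂ) + 1) * (k.choose (i + 1) : ℂ) = (k : ℂ) * ((k - 1).choose i : ℂ) := by
  exact_mod_cast congrArg (fun x : ℕ => (x : ℂ)) (chooseN2 k i)

/-- The first Jacobi sum. -/
def S1 (k m n a b e : ℕ) : ℂ :=
  ∑ i ∈ Finset.range (k + 1),
    (-1 : ℂ) ^ i * (k.choose i : ℂ) * cc (n + i) b e * cc (m + k - i) a (b + e - (n + i))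

/-- The third Jacobi sum. -/
def S3 (k m n a b e : ℕ) : ℂ :=
  ∑ i ∈ Finset.range (m + 1),
    (m.choose i : ℂ) * cc (k + i) a b * cc (m + n - i) (a + b - (k + i)) e

lemma S1A (k m n a b e : ℕ) :
    S1 k m n (a + 1) b e
      = -(m : ℂ) * S1 k (m - 1) n a b e - (k : ℂ) * S1 (k - 1) m n a b e := by
  have hK : (k : ℂ) * S1 (k - 1) m n a b e
      = ∑ i ∈ Finset.range (k + 1), (k : ℂ) *
          ((-1 : ℂ) ^ i * ((k - 1).choose i : ℂ) * cc (n + i) b e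
            * cc (m + (k - 1) - i) a (b + e - (n + i))) := by
    rw [S1, Finset.mul_sum]
    cases k with
    | zero => simp
    | succ s =>
      simp only [Nat.succ_sub_one]
      rw [eq_comm, Finset.sum_range_succ, Nat.choose_eq_zero_of_lt (by omega : s < s + 1)]
      simp
  have hM : -(m : ℂ) * S1 k (m - 1) n a b e
      = ∑ i ∈ Finset.range (k + 1), (-(m : ℂ)) *
          ((-1 : ℂ) ^ i * (k.choose i : ℂ) * cc (n + i) b e
            * cc (m - 1 + k - i) a (b + e - (n + i))) := by
    rw [S1, Finset.mul_sum]
  rw [hM, hK, S1, ← Finset.sum_sub_distrib]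
  refine Finset.sum_congr rfl ?_
  intro i hi
  have hik : i ≤ k := by simpa using Nat.lt_succ_iff.mp (Finset.mem_range.mp hi)
  set A := cc (n + i) b e with hA
  set X := b + e - (n + i) with hX
  rw [cc_succ_mid (m + k - i) a X]
  have hc1 := chooseC1 k i
  rcases Nat.eq_zero_or_pos k with rfl | hk
  · have hi0 : i = 0 := by omega
    subst hi0
    simp only [Nat.choose_self, Nat.cast_one, pow_zero, Nat.add_zero, Nat.sub_zero,
      Nat.add_sub_cancel, Nat.cast_zero]
    norm_num
    ring
  · rcases Nat.eq_zero_or_pos m with rfl | hm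
    · have d1 : 0 + k - i - 1 = 0 + (k - 1) - i := by omega
      have d2 : 0 - 1 + k - i = k - i := by omega
      rw [d1, d2]
      have hcast : ((0 + k - i : ℕ) : ℂ) = ((k - i : ℕ) : ℂ) := by norm_num
      push_cast [Nat.cast_zero] at hcast ⊢
      linear_combination (-(-1 : ℂ) ^ i * A * cc (0 + (k - 1) - i) a X) * hc1
    · have d1 : m + k - i - 1 = m - 1 + k - i := by omega
      have d2 : m + (k - 1) - i = m - 1 + k - i := by omega
      rw [d1, d2]
      have hcast : ((m + k - i : ℕ) : ℂ) = (m : ℂ) + ((k - i : ℕ) : ℂ) := by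
        have h3 : m + k - i = m + (k - i) := by omega
        rw [h3]; push_cast; ring
      rw [hcast]
      linear_combination (-(-1 : ℂ) ^ i * A * cc (m - 1 + k - i) a X) * hc1

lemma S1B (k m n a b e : ℕ) :
    S1 k m n a (b + 1) e
      = -(n : ℂ) * S1 k m (n - 1) a b e + (k : ℂ) * S1 (k - 1) m n a b e := by
  have key : ∀ i ∈ Finset.range (k + 1),
      (-1 : ℂ) ^ i * (k.choose i : ℂ) * cc (n + i) (b + 1) e
          * cc (m + k - i) a (b + 1 + e - (n + i))
      = -(n : ℂ) * ((-1 : ℂ) ^ i * (k.choose i : ℂ) * cc (n + i - 1) b e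
          * cc (m + k - i) a (b + 1 + e - (n + i)))
        + (-(i : ℂ)) * ((-1 : ℂ) ^ i * (k.choose i : ℂ) * cc (n + i - 1) b e
          * cc (m + k - i) a (b + 1 + e - (n + i))) := by
    intro i _
    rw [cc_succ_mid (n + i) b e]
    have hcast : ((n + i : ℕ) : ℂ) = (n : ℂ) + (i : ℂ) := by push_cast; ring
    rw [hcast]; ring
  rw [S1, Finset.sum_congr rfl key, Finset.sum_add_distrib]
  congr 1
  · rcases Nat.eq_zero_or_pos n with rfl | hn
    · simp
    · rw [S1, Finset.mul_sum]
      refine Finset.sum_congr rfl ?_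
      intro i _
      have d1 : n + i - 1 = n - 1 + i := by omega
      have d2 : b + 1 + e - (n + i) = b + e - (n - 1 + i) := by omega
      rw [d1, d2]
  · cases k with
    | zero => simp
    | succ s =>
      rw [Finset.sum_range_succ']
      simp only [Nat.cast_zero, neg_zero, zero_mul, add_zero]
      rw [S1, Finset.mul_sum]
      simp only [Nat.succ_sub_one]
      refine Finset.sum_congr rfl ?_
      intro i _
      have d1 : m + (s + 1) - (i + 1) = m + s - i := by omega
      have d2 : b + 1 + e - (n + (i + 1)) = b + e - (n + i) := by omega
      have d3 : n + (i + 1) - 1 = n + i := by omega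
      rw [d1, d2, d3]
      have h2 := chooseC2 (s + 1) i
      simp only [Nat.add_sub_cancel] at h2
      push_cast at h2 ⊢
      linear_combination ((-1 : ℂ) ^ i * cc (n + i) b e * cc (m + s - i) a (b + e - (n + i))) * h2

/-- the `i`-weighted part of the `S3` recurrences. -/
lemma S3iaux (k m n a b e : ℕ) :
    ∑ i ∈ Finset.range (m + 1), (i : ℂ) *
        ((m.choose i : ℂ) * cc (k + i - 1) a b * cc (m + n - i) (a + b + 1 - (k + i)) e)
      = (m : ℂ) * S3 k (m - 1) n a b e := by
  cases m with
  | zero => simp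
  | succ t =>
    rw [Finset.sum_range_succ']
    simp only [Nat.cast_zero, zero_mul, add_zero]
    rw [S3, Finset.mul_sum]
    simp only [Nat.succ_sub_one]
    refine Finset.sum_congr rfl ?_
    intro i _
    have d1 : k + (i + 1) - 1 = k + i := by omega
    have d2 : t + 1 + n - (i + 1) = t + n - i := by omega
    have d3 : a + b + 1 - (k + (i + 1)) = a + b - (k + i) := by omega
    rw [d1, d2, d3]
    have h2 := chooseC2 (t + 1) i
    simp only [Nat.add_sub_cancel] at h2
    push_cast at h2 ⊢
    linear_combination (cc (k + i) a b * cc (t + n - i) (a + b - (k + i)) e) * h2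

/-- the `k`-weighted part of the `S3` recurrences. -/
lemma S3kaux (k m n a b e : ℕ) :
    ∑ i ∈ Finset.range (m + 1), (k : ℂ) *
        ((m.choose i : ℂ) * cc (k + i - 1) a b * cc (m + n - i) (a + b + 1 - (k + i)) e)
      = (k : ℂ) * S3 (k - 1) m n a b e := by
  cases k with
  | zero => simp
  | succ s =>
    rw [S3, Finset.mul_sum]
    simp only [Nat.succ_sub_one]
    refine Finset.sum_congr rfl ?_
    intro i _
    have d1 : s + 1 + i - 1 = s + i := by omega
    have d3 : a + b + 1 - (s + 1 + i) = a + b - (s + i) := by omega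
    rw [d1, d3]

lemma S3A (k m n a b e : ℕ) :
    S3 k m n (a + 1) b e
      = -(m : ℂ) * S3 k (m - 1) n a b e - (k : ℂ) * S3 (k - 1) m n a b e := by
  have key : ∀ i ∈ Finset.range (m + 1),
      (m.choose i : ℂ) * cc (k + i) (a + 1) b * cc (m + n - i) (a + 1 + b - (k + i)) e
      = -((k : ℂ) * ((m.choose i : ℂ) * cc (k + i - 1) a b
            * cc (m + n - i) (a + b + 1 - (k + i)) e))
        + -((i : ℂ) * ((m.choose i : ℂ) * cc (k + i - 1) a b
            * cc (m + n - i) (a + b + 1 - (k + i)) e)) := by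
    intro i _
    have d : a + 1 + b - (k + i) = a + b + 1 - (k + i) := by omega
    rw [d, cc_succ_mid (k + i) a b]
    have hcast : ((k + i : ℕ) : ℂ) = (k : ℂ) + (i : ℂ) := by push_cast; ring
    rw [hcast]; ring
  rw [S3, Finset.sum_congr rfl key, Finset.sum_add_distrib, Finset.sum_neg_distrib,
    Finset.sum_neg_distrib, S3kaux, S3iaux]
  ring

lemma S3B (k m n a b e : ℕ) :
    S3 k m n a (b + 1) e
      = -(n : ℂ) * S3 k m (n - 1) a b e + (k : ℂ) * S3 (k - 1) m n a b e := by
  have key : ∀ i ∈ Finset.range (m + 1),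
      (m.choose i : ℂ) * cc (k + i) a (b + 1) * cc (m + n - i) (a + (b + 1) - (k + i)) e
      = (-(n : ℂ) * ((m.choose i : ℂ) * cc (k + i) a b
            * cc (m + n - i - 1) (a + b - (k + i)) e)
          + -(((m - i : ℕ) : ℂ) * ((m.choose i : ℂ) * cc (k + i) a b
            * cc (m + n - i - 1) (a + b - (k + i)) e)))
        + ((k : ℂ) * ((m.choose i : ℂ) * cc (k + i - 1) a b
            * cc (m + n - i) (a + b + 1 - (k + i)) e)
          + (i : ℂ) * ((m.choose i : ℂ) * cc (k + i - 1) a b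
            * cc (m + n - i) (a + b + 1 - (k + i)) e)) := by
    intro i hi
    have him : i ≤ m := by
      have := Finset.mem_range.mp hi; omega
    have d : a + (b + 1) - (k + i) = a + b + 1 - (k + i) := by omega
    rw [d, cc_succ_right (k + i) a b]
    have hU : cc (m + n - i) (a + b + 1 - (k + i)) e
        = -((n : ℂ) + ((m - i : ℕ) : ℂ)) * cc (m + n - i - 1) (a + b - (k + i)) e
          ∨ cc (k + i) a b = 0 := by
      by_cases h : k + i ≤ a + b
      · left
        have d2 : a + b + 1 - (k + i) = (a + b - (k + i)) + 1 := by omega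
        rw [d2, cc_succ_mid (m + n - i) (a + b - (k + i)) e]
        have hcast : ((m + n - i : ℕ) : ℂ) = (n : ℂ) + ((m - i : ℕ) : ℂ) := by
          have h3 : m + n - i = n + (m - i) := by omega
          rw [h3]; push_cast; ring
        rw [hcast]
      · right
        exact cc_eq_zero_of_lt (by omega)
    have hcast : ((k + i : ℕ) : ℂ) = (k : ℂ) + (i : ℂ) := by push_cast; ring
    rcases hU with hU | hU
    · rw [hU, hcast]; ring
    · rw [hU, hcast]; ring
  rw [S3, Finset.sum_congr rfl key, Finset.sum_add_distrib, Finset.sum_add_distrib,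
    Finset.sum_add_distrib, S3kaux, S3iaux, Finset.sum_neg_distrib]
  have hn : ∑ i ∈ Finset.range (m + 1), -(n : ℂ) *
      ((m.choose i : ℂ) * cc (k + i) a b * cc (m + n - i - 1) (a + b - (k + i)) e)
      = -(n : ℂ) * S3 k m (n - 1) a b e := by
    rcases Nat.eq_zero_or_pos n with rfl | hn
    · simp
    · rw [S3, Finset.mul_sum]
      refine Finset.sum_congr rfl ?_
      intro i _
      have d1 : m + n - i - 1 = m + (n - 1) - i := by omega
      rw [d1]
  have hmi : ∑ i ∈ Finset.range (m + 1), ((m - i : ℕ) : ℂ) *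
      ((m.choose i : ℂ) * cc (k + i) a b * cc (m + n - i - 1) (a + b - (k + i)) e)
      = (m : ℂ) * S3 k (m - 1) n a b e := by
    cases m with
    | zero => simp
    | succ t =>
      rw [Finset.sum_range_succ, Nat.sub_self, Nat.cast_zero, zero_mul, add_zero,
        S3, Finset.mul_sum]
      simp only [Nat.succ_sub_one]
      refine Finset.sum_congr rfl ?_
      intro i hi
      have hit : i < t + 1 := Finset.mem_range.mp hi
      have d1 : t + 1 + n - i - 1 = t + n - i := by omega
      rw [d1]
      have h1 := chooseC1 (t + 1) i
      simp only [Nat.add_sub_cancel] at h1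
      linear_combination (cc (k + i) a b * cc (t + n - i) (a + b - (k + i)) e) * h1
  rw [hn, hmi]
  ring

lemma cc_zero_mid (p l : ℕ) : cc p 0 l = dsc l p := by
  simp [cc, dsc]

/-- alternating sum of binomial coefficients, in `ℂ`. -/
lemma alt_sum (k : ℕ) :
    ∑ i ∈ Finset.range (k + 1), (-1 : ℂ) ^ i * (k.choose i : ℂ)
      = if k = 0 then 1 else 0 := by
  have h := Int.alternating_sum_range_choose (n := k)
  have := congrArg (fun x : ℤ => (x : ℂ)) h
  push_cast at this
  rw [this]

lemma dsc_mul (e p q : ℕ) : dsc e p * dsc (e - p) q = dsc e (p + q) := by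
  induction q with
  | zero => simp [dsc]
  | succ q ih =>
    have h1 : e.descFactorial (p + (q + 1)) = (e - (p + q)) * e.descFactorial (p + q) := by
      have : p + (q + 1) = (p + q) + 1 := by omega
      rw [this, Nat.descFactorial_succ]
    have h2 : (e - p).descFactorial (q + 1) = (e - p - q) * (e - p).descFactorial q :=
      Nat.descFactorial_succ _ _
    have h3 : e - p - q = e - (p + q) := by omega
    simp only [dsc] at *
    rw [h1, h2, h3]
    push_cast
    calc (e.descFactorial p : ℂ) * ((e - (p+q) : ℕ) * ((e-p).descFactorial q : ℂ))
        = ((e - (p+q) : ℕ) : ℂ) * ((e.descFactorial p : ℂ) * ((e-p).descFactorial q : ℂ)) := by ring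
      _ = _ := by rw [ih]

lemma baseS1 (k m n e : ℕ) :
    S1 k m n 0 0 e = if k = 0 then dsc e (m + n) else 0 := by
  have key : ∀ i ∈ Finset.range (k + 1),
      (-1 : ℂ) ^ i * (k.choose i : ℂ) * cc (n + i) 0 e * cc (m + k - i) 0 (0 + e - (n + i))
        = ((-1 : ℂ) ^ i * (k.choose i : ℂ)) * dsc e (m + n + k) := by
    intro i hi
    have hik : i ≤ k := by have := Finset.mem_range.mp hi; omega
    rw [cc_zero_mid, cc_zero_mid]
    have h0 : (0 : ℕ) + e - (n + i) = e - (n + i) := by omega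
    rw [h0]
    have h1 : (n + i) + (m + k - i) = m + n + k := by omega
    calc (-1 : ℂ) ^ i * (k.choose i : ℂ) * dsc e (n + i) * dsc (e - (n + i)) (m + k - i)
        = ((-1 : ℂ) ^ i * (k.choose i : ℂ))
            * (dsc e (n + i) * dsc (e - (n + i)) (m + k - i)) := by ring
      _ = _ := by rw [dsc_mul, h1]
  rw [S1, Finset.sum_congr rfl key, ← Finset.sum_mul, alt_sum]
  split
  · rename_i hk
    subst hk
    simp
  · simp

lemma baseS3 (k m n e : ℕ) :
    S3 k m n 0 0 e = if k = 0 then dsc e (m + n) else 0 := by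
  rw [S3]
  rw [Finset.sum_eq_single 0]
  · simp only [Nat.choose_zero_right, Nat.cast_one, one_mul, Nat.add_zero, Nat.sub_zero]
    cases k with
    | zero =>
      simp only [if_pos rfl]
      have h1 : cc 0 0 0 = 1 := by simp [cc, dsc]
      have h2 : (0 : ℕ) + 0 - 0 = 0 := rfl
      rw [h1, cc_zero_mid]
      norm_num
    | succ s =>
      have h1 : cc (s + 1) 0 0 = 0 := cc_eq_zero_of_lt (by omega)
      rw [h1]
      simp
  · intro i hi hne
    have h1 : cc (k + i) 0 0 = 0 := by
      apply cc_eq_zero_of_lt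
      omega
    rw [h1]
    ring
  · intro h
    exact absurd (Finset.mem_range.mpr (by omega)) h

/-- `S1 = S3` : the first half of the scalar Jacobi identity. -/
lemma I1 : ∀ b a k m n e : ℕ, S1 k m n a b e = S3 k m n a b e := by
  have base : ∀ a k m n e : ℕ, S1 k m n a 0 e = S3 k m n a 0 e := by
    intro a
    induction a with
    | zero => intro k m n e; rw [baseS1, baseS3]
    | succ a ih => intro k m n e; rw [S1A, S3A, ih, ih]
  intro b
  induction b with
  | zero => exact base
  | succ b ih => intro a k m n e; rw [S1B, S3B, ih, ih]

lemma negpow (k : ℕ) : (k : ℂ) * (-1 : ℂ) ^ k = -((k : ℂ) * (-1 : ℂ) ^ (k - 1)) := by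
  cases k with
  | zero => simp
  | succ s => simp [pow_succ]

/-- `(-1)^k·S1(k,n,m,b,a,e) = S3(k,m,n,a,b,e)` : the second half. -/
lemma I2 : ∀ b a k m n e : ℕ, (-1 : ℂ) ^ k * S1 k n m b a e = S3 k m n a b e := by
  have base : ∀ a k m n e : ℕ, (-1 : ℂ) ^ k * S1 k n m 0 a e = S3 k m n a 0 e := by
    intro a
    induction a with
    | zero =>
      intro k m n e
      rw [baseS1, baseS3]
      rcases Nat.eq_zero_or_pos k with rfl | hk
      · simp [Nat.add_comm n m]
      · rw [if_neg (by omega), if_neg (by omega)]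
        ring
    | succ a ih =>
      intro k m n e
      rw [S1B, S3A, ← ih, ← ih]
      linear_combination (S1 (k - 1) n m 0 a e) * negpow k
  intro b
  induction b with
  | zero => exact base
  | succ b ih =>
    intro a k m n e
    rw [S1A, S3B, ← ih, ← ih]
    linear_combination (-(S1 (k - 1) n m b a e)) * negpow k

/-- The scalar skew-symmetry identity. -/
lemma SK : ∀ j n l : ℕ, cc n j l
    = ∑ k ∈ Finset.range (j + l + 1),
        (-1 : ℂ) ^ (n + k) * ((k.factorial : ℂ))⁻¹ * cc (n + k) l j := by
  intro j
  induction j with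
  | zero =>
    intro n l
    rw [cc_zero_mid]
    rw [Finset.sum_eq_single (l - n)]
    · rcases Nat.lt_or_ge l n with h | h
      · have h1 : l - n = 0 := by omega
        rw [h1]
        have h2 : cc (n + 0) l 0 = 0 := by
          simp only [Nat.add_zero, cc]
          rw [dsc_eq_zero (show (0:ℕ) < n - l by omega)]
          ring
        rw [h2, dsc_eq_zero h]
        ring
      · have h1 : n + (l - n) = l := by omega
        rw [h1]
        have h2 : cc l l 0 = (-1 : ℂ) ^ l * (l.factorial : ℂ) := by
          simp [cc, dsc, Nat.descFactorial_self]
        rw [h2]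
        have hfact : ((l - n).factorial : ℂ) * dsc l n = (l.factorial : ℂ) := by
          simp only [dsc]
          exact_mod_cast congrArg (fun x : ℕ => (x : ℂ)) (Nat.factorial_mul_descFactorial h)
        have hne : ((l - n).factorial : ℂ) ≠ 0 := Nat.cast_ne_zero.mpr (Nat.factorial_ne_zero _)
        have hsq : (-1 : ℂ) ^ l * (-1 : ℂ) ^ l = 1 := by
          rw [← mul_pow, neg_mul_neg, mul_one, one_pow]
        field_simp
        rw [sq, hsq, one_mul]
        linear_combination hfact
    · intro k hk hne
      rcases Nat.lt_or_ge (n + k) l with h | h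
      · have : cc (n + k) l 0 = 0 := by
          simp only [cc]
          rw [dsc_eq_zero h]
          ring
        rw [this]; ring
      · have hgt : l < n + k := by
          rcases Nat.lt_or_ge l (n + k) with h2 | h2
          · exact h2
          · exfalso; apply hne
            have := Finset.mem_range.mp hk
            omega
        have : cc (n + k) l 0 = 0 := by
          simp only [cc]
          have : dsc 0 (n + k - l) = 0 := by
            have h3 : n + k - l = (n + k - l - 1) + 1 := by omega
            rw [h3]
            exact dsc_eq_zero (by omega)
          rw [this]; ring
        rw [this]; ring
    · intro h
      exact absurd (Finset.mem_range.mpr (by omega)) h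
  | succ j ih =>
    intro n l
    have key : ∀ k ∈ Finset.range (j + 1 + l + 1),
        (-1 : ℂ) ^ (n + k) * ((k.factorial : ℂ))⁻¹ * cc (n + k) l (j + 1)
        = ((-1 : ℂ) ^ (n + k) * ((k.factorial : ℂ))⁻¹ * cc (n + k) l j
            + (n : ℂ) * ((-1 : ℂ) ^ (n + k) * ((k.factorial : ℂ))⁻¹ * cc (n + k - 1) l j))
          + (k : ℂ) * ((-1 : ℂ) ^ (n + k) * ((k.factorial : ℂ))⁻¹ * cc (n + k - 1) l j) := by
      intro k _
      rw [cc_succ_right (n + k) l j]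
      have hcast : ((n + k : ℕ) : ℂ) = (n : ℂ) + (k : ℂ) := by push_cast; ring
      rw [hcast]
      ring
    rw [Finset.sum_congr rfl key, Finset.sum_add_distrib, Finset.sum_add_distrib]
    have hsplit : j + 1 + l + 1 = (j + l + 1) + 1 := by omega
    have hT1 : ∑ k ∈ Finset.range (j + 1 + l + 1),
        (-1 : ℂ) ^ (n + k) * ((k.factorial : ℂ))⁻¹ * cc (n + k) l j = cc n j l := by
      rw [hsplit, Finset.sum_range_succ,
        cc_eq_zero_of_lt (show l + j < n + (j + l + 1) by omega), ← ih n l]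
      ring
    have hT2a : ∑ k ∈ Finset.range (j + 1 + l + 1),
        (n : ℂ) * ((-1 : ℂ) ^ (n + k) * ((k.factorial : ℂ))⁻¹ * cc (n + k - 1) l j)
        = -(n : ℂ) * cc (n - 1) j l := by
      rcases Nat.eq_zero_or_pos n with rfl | hn
      · simp
      · have key2 : ∀ k ∈ Finset.range (j + 1 + l + 1),
            (n : ℂ) * ((-1 : ℂ) ^ (n + k) * ((k.factorial : ℂ))⁻¹ * cc (n + k - 1) l j)
            = -(n : ℂ) * ((-1 : ℂ) ^ (n - 1 + k) * ((k.factorial : ℂ))⁻¹ * cc (n - 1 + k) l j) := by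
          intro k _
          have d1 : n + k - 1 = n - 1 + k := by omega
          have d2 : n + k = (n - 1 + k) + 1 := by omega
          rw [d1, d2, pow_succ]
          ring
        rw [Finset.sum_congr rfl key2, ← Finset.mul_sum, hsplit, Finset.sum_range_succ,
          cc_eq_zero_of_lt (show l + j < n - 1 + (j + l + 1) by omega), ← ih (n - 1) l]
        ring
    have hT2b : ∑ k ∈ Finset.range (j + 1 + l + 1),
        (k : ℂ) * ((-1 : ℂ) ^ (n + k) * ((k.factorial : ℂ))⁻¹ * cc (n + k - 1) l j)
        = -cc n j l := by
      rw [hsplit, Finset.sum_range_succ']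
      simp only [Nat.cast_zero, zero_mul, add_zero]
      have key3 : ∀ k ∈ Finset.range (j + l + 1),
          ((k + 1 : ℕ) : ℂ) * ((-1 : ℂ) ^ (n + (k + 1)) * (((k + 1).factorial : ℂ))⁻¹
            * cc (n + (k + 1) - 1) l j)
          = -((-1 : ℂ) ^ (n + k) * ((k.factorial : ℂ))⁻¹ * cc (n + k) l j) := by
        intro k _
        have d1 : n + (k + 1) - 1 = n + k := by omega
        have d2 : n + (k + 1) = (n + k) + 1 := by omega
        rw [d1, d2, pow_succ]
        have h0 : ((k.factorial : ℂ)) ≠ 0 := Nat.cast_ne_zero.mpr (Nat.factorial_ne_zero k)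
        have h1 : (((k + 1).factorial : ℂ)) = ((k + 1 : ℕ) : ℂ) * (k.factorial : ℂ) := by
          rw [Nat.factorial_succ]; push_cast; ring
        have h2 : ((k + 1 : ℕ) : ℂ) ≠ 0 := Nat.cast_ne_zero.mpr (by omega)
        have hfac : (((k + 1).factorial : ℂ))⁻¹ = (((k + 1) : ℕ) : ℂ)⁻¹ * ((k.factorial : ℂ))⁻¹ := by
          rw [h1, mul_inv]
        rw [hfac]
        have hcan : ((k + 1 : ℕ) : ℂ) * (((k + 1) : ℕ) : ℂ)⁻¹ = 1 := mul_inv_cancel₀ h2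
        linear_combination ((-1 : ℂ) ^ (n + k) * (-1) * ((k.factorial : ℂ))⁻¹ * cc (n + k) l j) * hcan
      rw [Finset.sum_congr rfl key3, Finset.sum_neg_distrib, ← ih n l]
    rw [hT1, hT2a, hT2b, cc_succ_mid]
    ring

section ModuleLayer

lemma Dop_single (j : ℕ) (u : S) :
    Dop S (Finsupp.single j u) = Finsupp.single (j + 1) u := by
  simp [Dop, Finsupp.lmapDomain_apply, Finsupp.mapDomain_single]

lemma Dop_pow_single (k j : ℕ) (u : S) :
    (Dop S ^ k) (Finsupp.single j u) = Finsupp.single (j + k) u := by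
  induction k with
  | zero => simp
  | succ k ih =>
    rw [pow_succ', Module.End.mul_apply, ih, Dop_single, add_assoc]

/-- The extended products on `ℂ[D]⊗S` associated to a Lie bracket `B`. -/
def Mmap (B : S →ₗ[ℂ] S →ₗ[ℂ] S) (n : ℕ) :
    (ℕ →₀ S) →ₗ[ℂ] (ℕ →₀ S) →ₗ[ℂ] (ℕ →₀ S) :=
  Finsupp.lsum ℂ fun j =>
    (Finsupp.lsum ℂ fun l =>
      (B.compr₂ ((cc n j l) • (Finsupp.lsingle (j + l - n)))).flip).flip

lemma Mmap_single (B : S →ₗ[ℂ] S →ₗ[ℂ] S) (n j l : ℕ) (u v : S) :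
    Mmap B n (Finsupp.single j u) (Finsupp.single l v)
      = cc n j l • Finsupp.single (j + l - n) (B u v) := by
  simp [Mmap, Finsupp.lsum_single, LinearMap.flip_apply, LinearMap.compr₂_apply,
    LinearMap.smul_apply, Finsupp.lsingle_apply]

variable (B : S →ₗ[ℂ] S →ₗ[ℂ] S)

lemma Mmap_D2 (n : ℕ) (x y : ℕ →₀ S) :
    Mmap B (n + 1) (Dop S x) y = (-((n : ℂ) + 1)) • Mmap B n x y := by
  induction x using Finsupp.induction_linear with
  | zero => simp
  | add f g hf hg => simp only [map_add, LinearMap.add_apply, hf, hg, smul_add]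
  | single j u =>
    induction y using Finsupp.induction_linear with
    | zero => simp
    | add f g hf hg => simp only [map_add, hf, hg, smul_add]
    | single l v =>
      rw [Dop_single, Mmap_single, Mmap_single, cc_succ_succ]
      have hd : j + 1 + l - (n + 1) = j + l - n := by omega
      rw [hd, ← smul_smul]

lemma Mmap_D0 (x y : ℕ →₀ S) : Mmap B 0 (Dop S x) y = 0 := by
  induction x using Finsupp.induction_linear with
  | zero => simp
  | add f g hf hg => simp only [map_add, LinearMap.add_apply, hf, hg, add_zero]
  | single j u =>
    induction y using Finsupp.induction_linear with
    | zero => simp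
    | add f g hf hg => simp only [map_add, hf, hg, add_zero]
    | single l v =>
      rw [Dop_single, Mmap_single, cc_succ_mid]
      simp

lemma Mmap_D4 (n : ℕ) (x y : ℕ →₀ S) :
    Dop S (Mmap B n x y) = Mmap B n (Dop S x) y + Mmap B n x (Dop S y) := by
  induction x using Finsupp.induction_linear with
  | zero => simp
  | add f g hf hg =>
    simp only [map_add, LinearMap.add_apply, hf, hg]
    abel
  | single j u =>
    induction y using Finsupp.induction_linear with
    | zero => simp
    | add f g hf hg =>
      simp only [map_add, hf, hg]
      abel
    | single l v =>
      rw [Dop_single, Dop_single, Mmap_single, Mmap_single, Mmap_single, map_smul,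
        Dop_single]
      have hd1 : j + 1 + l - n = j + l + 1 - n := by omega
      have hd2 : j + (l + 1) - n = j + l + 1 - n := by omega
      rw [hd1, hd2, ← add_smul, cc_deriv]
      by_cases h : n ≤ j + l
      · have hd3 : j + l - n + 1 = j + l + 1 - n := by omega
        rw [hd3]
      · rw [cc_eq_zero_of_lt (by omega)]
        simp

lemma Mmap_bound_single (q a : ℕ) (b : S) :
    ∀ y : ℕ →₀ S, (∀ l ∈ y.support, a + l < q) →
      Mmap B q (Finsupp.single a b) y = 0 := by
  intro y
  induction y using Finsupp.induction with
  | zero => simp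
  | single_add a' b' f ha' hb' ih =>
    intro hc
    have hdisj : Disjoint (Finsupp.single a' b').support f.support := by
      rw [Finsupp.support_single_ne_zero a' hb']
      simpa using ha'
    have hsupp : (Finsupp.single a' b' + f).support
        = (Finsupp.single a' b').support ∪ f.support := Finsupp.support_add_eq hdisj
    rw [map_add, Mmap_single]
    have h1 : cc q a a' = 0 := by
      apply cc_eq_zero_of_lt
      have : a' ∈ (Finsupp.single a' b' + f).support := by
        rw [hsupp, Finsupp.support_single_ne_zero a' hb']
        simp
      have := hc a' this
      omega
    rw [h1, zero_smul, zero_add]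
    apply ih
    intro l hl
    exact hc l (by rw [hsupp]; exact Finset.mem_union_right _ hl)

lemma Mmap_bound (q : ℕ) :
    ∀ x y : ℕ →₀ S, (∀ j ∈ x.support, ∀ l ∈ y.support, j + l < q) →
      Mmap B q x y = 0 := by
  intro x
  induction x using Finsupp.induction with
  | zero => simp
  | single_add a b f ha' hb ih =>
    intro y hc
    have hdisj : Disjoint (Finsupp.single a b).support f.support := by
      rw [Finsupp.support_single_ne_zero a hb]
      simpa using ha'
    have hsupp : (Finsupp.single a b + f).support
        = (Finsupp.single a b).support ∪ f.support := Finsupp.support_add_eq hdisj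
    rw [map_add, LinearMap.add_apply]
    have h1 : Mmap B q (Finsupp.single a b) y = 0 := by
      apply Mmap_bound_single
      intro l hl
      apply hc a _ l hl
      rw [hsupp, Finsupp.support_single_ne_zero a hb]
      simp
    have h2 : Mmap B q f y = 0 := by
      apply ih
      intro j hj l hl
      exact hc j (by rw [hsupp]; exact Finset.mem_union_right _ hj) l hl
    rw [h1, h2, add_zero]

lemma skewfam_supp (n : ℕ) (x y : ℕ →₀ S) :
    (Function.support fun k =>
        (((-1 : ℂ) ^ (n + k)) / (Nat.factorial k : ℂ)) •
          ((Dop S ^ k) (Mmap B (n + k) y x)))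
      ⊆ ↑(Finset.range (y.support.sup id + x.support.sup id + 1)) := by
  intro k hk
  simp only [Function.mem_support] at hk
  by_contra hcon
  apply hk
  have hk2 : y.support.sup id + x.support.sup id + 1 ≤ k := by
    simpa [Finset.mem_coe, Finset.mem_range, not_lt] using hcon
  rw [Mmap_bound B (n + k) y x ?_]
  · simp
  · intro j hj l hl
    have h1 : j ≤ y.support.sup id := Finset.le_sup (f := id) hj
    have h2 : l ≤ x.support.sup id := Finset.le_sup (f := id) hl
    omega

lemma Mmap_skew (hsk : ∀ u v : S, B u v = -B v u) (n : ℕ) (x y : ℕ →₀ S) :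
    Mmap B n x y =
      -∑ᶠ k : ℕ, (((-1 : ℂ) ^ (n + k)) / (Nat.factorial k : ℂ)) •
        ((Dop S ^ k) (Mmap B (n + k) y x)) := by
  induction x using Finsupp.induction_linear with
  | zero =>
    have hz : ∀ k : ℕ, (((-1 : ℂ) ^ (n + k)) / (Nat.factorial k : ℂ)) •
        ((Dop S ^ k) (Mmap B (n + k) y 0)) = 0 := by
      intro k; simp
    simp
  | add f g hf hg =>
    have hcong : ∀ k : ℕ, (((-1 : ℂ) ^ (n + k)) / (Nat.factorial k : ℂ)) •
          ((Dop S ^ k) (Mmap B (n + k) y (f + g)))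
        = (((-1 : ℂ) ^ (n + k)) / (Nat.factorial k : ℂ)) •
            ((Dop S ^ k) (Mmap B (n + k) y f))
          + (((-1 : ℂ) ^ (n + k)) / (Nat.factorial k : ℂ)) •
            ((Dop S ^ k) (Mmap B (n + k) y g)) := by
      intro k
      rw [map_add, map_add, smul_add]
    rw [map_add, LinearMap.add_apply, hf, hg, finsum_congr hcong, finsum_add_distrib
      (Set.Finite.subset (Finset.finite_toSet _) (skewfam_supp B n f y))
      (Set.Finite.subset (Finset.finite_toSet _) (skewfam_supp B n g y))]
    abel
  | single j u =>
    induction y using Finsupp.induction_linear with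
    | zero =>
      have hz : ∀ k : ℕ, (((-1 : ℂ) ^ (n + k)) / (Nat.factorial k : ℂ)) •
          ((Dop S ^ k) (Mmap B (n + k) (0 : ℕ →₀ S) (Finsupp.single j u))) = 0 := by
        intro k; simp
      rw [finsum_congr hz]
      simp
    | add f g hf hg =>
      have hcong : ∀ k : ℕ, (((-1 : ℂ) ^ (n + k)) / (Nat.factorial k : ℂ)) •
            ((Dop S ^ k) (Mmap B (n + k) (f + g) (Finsupp.single j u)))
          = (((-1 : ℂ) ^ (n + k)) / (Nat.factorial k : ℂ)) •
              ((Dop S ^ k) (Mmap B (n + k) f (Finsupp.single j u)))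
            + (((-1 : ℂ) ^ (n + k)) / (Nat.factorial k : ℂ)) •
              ((Dop S ^ k) (Mmap B (n + k) g (Finsupp.single j u))) := by
        intro k
        rw [map_add, LinearMap.add_apply, map_add, smul_add]
      rw [map_add, hf, hg, finsum_congr hcong, finsum_add_distrib
        (Set.Finite.subset (Finset.finite_toSet _) (skewfam_supp B n (Finsupp.single j u) f))
        (Set.Finite.subset (Finset.finite_toSet _) (skewfam_supp B n (Finsupp.single j u) g))]
      abel
    | single l v =>
      have hsub : (Function.support fun k =>
          (((-1 : ℂ) ^ (n + k)) / (Nat.factorial k : ℂ)) •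
            ((Dop S ^ k) (Mmap B (n + k) (Finsupp.single l v) (Finsupp.single j u))))
          ⊆ ↑(Finset.range (j + l + 1)) := by
        intro k hk
        simp only [Function.mem_support] at hk
        by_contra hcon
        apply hk
        have hk2 : j + l + 1 ≤ k := by
          simpa [Finset.mem_coe, Finset.mem_range, not_lt] using hcon
        rw [Mmap_single, cc_eq_zero_of_lt (by omega : l + j < n + k)]
        simp
      rw [finsum_eq_finset_sum_of_support_subset _ hsub]
      have key : ∀ k ∈ Finset.range (j + l + 1),
          (((-1 : ℂ) ^ (n + k)) / (Nat.factorial k : ℂ)) •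
            ((Dop S ^ k) (Mmap B (n + k) (Finsupp.single l v) (Finsupp.single j u)))
          = ((-1 : ℂ) ^ (n + k) * ((Nat.factorial k : ℂ))⁻¹ * cc (n + k) l j) •
              Finsupp.single (j + l - n) (B v u) := by
        intro k _
        rw [Mmap_single, map_smul, Dop_pow_single]
        by_cases h : cc (n + k) l j = 0
        · rw [h]; simp
        · obtain ⟨h1, h2⟩ := cc_ne_zero_bounds h
          have hd : l + j - (n + k) + k = j + l - n := by omega
          rw [hd, smul_smul, div_eq_mul_inv]
      rw [Finset.sum_congr rfl key, ← Finset.sum_smul, ← SK j n l, Mmap_single]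
      rw [hsk u v]
      simp

lemma Mmap_jacobi (hJ : ∀ u v w : S, B u (B v w) - B v (B u w) = B (B u v) w)
    (k m n : ℕ) (x y z : ℕ →₀ S) :
    ∑ᶠ i : ℕ, ((-1 : ℂ) ^ i * (Nat.choose k i : ℂ)) •
        (Mmap B (m + k - i) x (Mmap B (n + i) y z)
          - ((-1 : ℂ) ^ k) • Mmap B (n + k - i) y (Mmap B (m + i) x z))
      = ∑ᶠ i : ℕ, ((Nat.choose m i : ℂ)) • Mmap B (m + n - i) (Mmap B (k + i) x y) z := by
  have hLsub : (Function.support fun i => ((-1 : ℂ) ^ i * (Nat.choose k i : ℂ)) •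
        (Mmap B (m + k - i) x (Mmap B (n + i) y z)
          - ((-1 : ℂ) ^ k) • Mmap B (n + k - i) y (Mmap B (m + i) x z)))
      ⊆ ↑(Finset.range (k + 1)) := by
    intro i hi
    simp only [Function.mem_support] at hi
    by_contra hcon
    apply hi
    have : k < i := by simpa [Finset.mem_coe, Finset.mem_range, not_lt] using hcon
    rw [Nat.choose_eq_zero_of_lt this]
    simp
  have hRsub : (Function.support fun i => ((Nat.choose m i : ℂ)) •
        Mmap B (m + n - i) (Mmap B (k + i) x y) z)
      ⊆ ↑(Finset.range (m + 1)) := by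
    intro i hi
    simp only [Function.mem_support] at hi
    by_contra hcon
    apply hi
    have : m < i := by simpa [Finset.mem_coe, Finset.mem_range, not_lt] using hcon
    rw [Nat.choose_eq_zero_of_lt this]
    simp
  rw [finsum_eq_finset_sum_of_support_subset _ hLsub,
    finsum_eq_finset_sum_of_support_subset _ hRsub]
  clear hLsub hRsub
  induction x using Finsupp.induction_linear with
  | zero => simp
  | add f g hf hg =>
    simp only [map_add, LinearMap.add_apply, smul_add, add_sub_add_comm,
      Finset.sum_add_distrib] at hf hg ⊢
    rw [hf, hg]
  | single a u =>
    induction y using Finsupp.induction_linear with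
    | zero => simp
    | add f g hf hg =>
      simp only [map_add, LinearMap.add_apply, smul_add, add_sub_add_comm,
        Finset.sum_add_distrib] at hf hg ⊢
      rw [hf, hg]
    | single b v =>
      induction z using Finsupp.induction_linear with
      | zero => simp
      | add f g hf hg =>
        simp only [map_add, LinearMap.add_apply, smul_add, add_sub_add_comm,
          Finset.sum_add_distrib] at hf hg ⊢
        rw [hf, hg]
      | single e w =>
        have hT1 : ∀ i ∈ Finset.range (k + 1),
            Mmap B (m + k - i) (Finsupp.single a u)
                (Mmap B (n + i) (Finsupp.single b v) (Finsupp.single e w))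
              = (cc (n + i) b e * cc (m + k - i) a (b + e - (n + i))) •
                  Finsupp.single (a + b + e - (k + m + n)) (B u (B v w)) := by
          intro i hi
          have hik : i ≤ k := by have := Finset.mem_range.mp hi; omega
          rw [Mmap_single, map_smul, Mmap_single, smul_smul]
          by_cases h1 : cc (n + i) b e = 0
          · rw [h1]; simp
          by_cases h2 : cc (m + k - i) a (b + e - (n + i)) = 0
          · rw [h2]; simp
          obtain ⟨hb1, hb2⟩ := cc_ne_zero_bounds h1
          obtain ⟨hb3, hb4⟩ := cc_ne_zero_bounds h2
          have hdd : a + (b + e - (n + i)) - (m + k - i) = a + b + e - (k + m + n) := by omega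
          rw [hdd]
        have hT2 : ∀ i ∈ Finset.range (k + 1),
            Mmap B (n + k - i) (Finsupp.single b v)
                (Mmap B (m + i) (Finsupp.single a u) (Finsupp.single e w))
              = (cc (m + i) a e * cc (n + k - i) b (a + e - (m + i))) •
                  Finsupp.single (a + b + e - (k + m + n)) (B v (B u w)) := by
          intro i hi
          have hik : i ≤ k := by have := Finset.mem_range.mp hi; omega
          rw [Mmap_single, map_smul, Mmap_single, smul_smul]
          by_cases h1 : cc (m + i) a e = 0
          · rw [h1]; simp
          by_cases h2 : cc (n + k - i) b (a + e - (m + i)) = 0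
          · rw [h2]; simp
          obtain ⟨hb1, hb2⟩ := cc_ne_zero_bounds h1
          obtain ⟨hb3, hb4⟩ := cc_ne_zero_bounds h2
          have hdd : b + (a + e - (m + i)) - (n + k - i) = a + b + e - (k + m + n) := by omega
          rw [hdd]
        have hT3 : ∀ i ∈ Finset.range (m + 1),
            Mmap B (m + n - i)
                (Mmap B (k + i) (Finsupp.single a u) (Finsupp.single b v)) (Finsupp.single e w)
              = (cc (k + i) a b * cc (m + n - i) (a + b - (k + i)) e) •
                  Finsupp.single (a + b + e - (k + m + n)) (B (B u v) w) := by
          intro i hi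
          have him : i ≤ m := by have := Finset.mem_range.mp hi; omega
          rw [Mmap_single, map_smul, LinearMap.smul_apply, Mmap_single, smul_smul]
          by_cases h1 : cc (k + i) a b = 0
          · rw [h1]; simp
          by_cases h2 : cc (m + n - i) (a + b - (k + i)) e = 0
          · rw [h2]; simp
          obtain ⟨hb1, hb2⟩ := cc_ne_zero_bounds h1
          obtain ⟨hb3, hb4⟩ := cc_ne_zero_bounds h2
          have hdd : a + b - (k + i) + e - (m + n - i) = a + b + e - (k + m + n) := by omega
          rw [hdd]
        have key : ∀ i ∈ Finset.range (k + 1),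
            ((-1 : ℂ) ^ i * (Nat.choose k i : ℂ)) •
              (Mmap B (m + k - i) (Finsupp.single a u)
                  (Mmap B (n + i) (Finsupp.single b v) (Finsupp.single e w))
                - ((-1 : ℂ) ^ k) • Mmap B (n + k - i) (Finsupp.single b v)
                    (Mmap B (m + i) (Finsupp.single a u) (Finsupp.single e w)))
            = ((-1 : ℂ) ^ i * (Nat.choose k i : ℂ)
                  * (cc (n + i) b e * cc (m + k - i) a (b + e - (n + i)))) •
                Finsupp.single (a + b + e - (k + m + n)) (B u (B v w))
              - ((-1 : ℂ) ^ k * ((-1 : ℂ) ^ i * (Nat.choose k i : ℂ)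
                  * (cc (m + i) a e * cc (n + k - i) b (a + e - (m + i))))) •
                Finsupp.single (a + b + e - (k + m + n)) (B v (B u w)) := by
          intro i hi
          rw [hT1 i hi, hT2 i hi]
          module
        have key3 : ∀ i ∈ Finset.range (m + 1),
            ((Nat.choose m i : ℂ)) • Mmap B (m + n - i)
                (Mmap B (k + i) (Finsupp.single a u) (Finsupp.single b v)) (Finsupp.single e w)
            = ((Nat.choose m i : ℂ) * (cc (k + i) a b * cc (m + n - i) (a + b - (k + i)) e)) •
                Finsupp.single (a + b + e - (k + m + n)) (B (B u v) w) := by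
          intro i hi
          rw [hT3 i hi, smul_smul]
        rw [Finset.sum_congr rfl key, Finset.sum_congr rfl key3, Finset.sum_sub_distrib,
          ← Finset.sum_smul, ← Finset.sum_smul, ← Finset.sum_smul]
        have hS1 : ∑ i ∈ Finset.range (k + 1), ((-1 : ℂ) ^ i * (Nat.choose k i : ℂ)
              * (cc (n + i) b e * cc (m + k - i) a (b + e - (n + i))))
            = S1 k m n a b e := by
          rw [S1]
          exact Finset.sum_congr rfl fun i _ => by ring
        have hS2 : ∑ i ∈ Finset.range (k + 1), ((-1 : ℂ) ^ k * ((-1 : ℂ) ^ i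
              * (Nat.choose k i : ℂ) * (cc (m + i) a e * cc (n + k - i) b (a + e - (m + i)))))
            = (-1 : ℂ) ^ k * S1 k n m b a e := by
          rw [S1, Finset.mul_sum]
          exact Finset.sum_congr rfl fun i _ => by ring
        have hS3 : ∑ i ∈ Finset.range (m + 1), ((Nat.choose m i : ℂ)
              * (cc (k + i) a b * cc (m + n - i) (a + b - (k + i)) e))
            = S3 k m n a b e := by
          rw [S3]
          exact Finset.sum_congr rfl fun i _ => by ring
        rw [hS1, hS2, hS3, I1 b a k m n e, I2 b a k m n e, ← smul_sub,
          ← Finsupp.single_sub, hJ u v w]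

end ModuleLayer


end Stmt15aux

/-- let `S` be a formula with `uₙv ∈ S` for all `u, v ∈ S`, `n ∈ ℕ`
(i.e. `Fₙᵏ(u,v) = 0` for `k ≥ 1`).  Then `ℂ[D]⊗S` with the extended products is a
vertex Lie algebra if and only if `Fₙ = 0` for all `n ≥ 1` and `F₀` is a Lie algebra
bracket on `S`. -/
theorem stmt15 (A : Formula S)
    (hS : ∀ (n k : ℕ) (u v : S), 1 ≤ k → (A.F n u v) k = 0) :
    (∃ M : ℕ → (ℕ →₀ S) →ₗ[ℂ] (ℕ →₀ S) →ₗ[ℂ] (ℕ →₀ S),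
      ExtProp A M ∧ HalfSkew M ∧ HalfJacobi M) ↔
    ((∀ n : ℕ, 1 ≤ n → ∀ u v : S, A.F n u v = 0) ∧
     (∀ u v : S, (A.F 0 u v) 0 = -((A.F 0 v u) 0)) ∧
     (∀ u v w : S,
        (A.F 0 u ((A.F 0 v w) 0)) 0 - (A.F 0 v ((A.F 0 u w) 0)) 0
          = (A.F 0 ((A.F 0 u v) 0) w) 0)) := by
  open Stmt15aux in
  have hconc : ∀ (p : ℕ) (u v : S), A.F p u v = Finsupp.single 0 ((A.F p u v) 0) := by
    intro p u v
    ext t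
    cases t with
    | zero => simp
    | succ t =>
      rw [hS p (t + 1) u v (by omega), Finsupp.single_apply, if_neg (by omega)]
  constructor
  · rintro ⟨M, ⟨hM1, hM2, hM3, hM4⟩, hskew, hjac⟩
    have main : ∀ u v : S, ∃ N : ℕ, 1 ≤ N ∧ (∀ p, N ≤ p → A.F p v u = 0) ∧
        ∀ t : ℕ, (A.F 0 u v) t
          = -∑ k ∈ Finset.range N,
              ((((-1 : ℂ) ^ k) / (Nat.factorial k : ℂ)) •
                Finsupp.single k ((A.F k v u) 0)) t := by
      intro u v
      obtain ⟨N0, hN0⟩ := A.trunc v u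
      refine ⟨max N0 1, by omega, fun p hp => hN0 p (by omega), ?_⟩
      have hskw := hskew 0 (Finsupp.single 0 u) (Finsupp.single 0 v)
      rw [hM1 0 u v] at hskw
      have hterm : ∀ k : ℕ,
          (((-1 : ℂ) ^ (0 + k)) / (Nat.factorial k : ℂ)) •
              ((Dop S ^ k) (M (0 + k) (Finsupp.single 0 v) (Finsupp.single 0 u)))
            = (((-1 : ℂ) ^ k) / (Nat.factorial k : ℂ)) •
                Finsupp.single k ((A.F k v u) 0) := by
        intro k
        rw [Nat.zero_add, hM1 k v u]
        conv_lhs => rw [hconc k v u]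
        rw [Stmt15aux.Dop_pow_single, Nat.zero_add]
      rw [finsum_congr hterm] at hskw
      have hsupp : (Function.support fun k =>
            (((-1 : ℂ) ^ k) / (Nat.factorial k : ℂ)) •
              Finsupp.single k ((A.F k v u) 0))
          ⊆ ↑(Finset.range (max N0 1)) := by
        intro k hk
        simp only [Function.mem_support] at hk
        by_contra hcon
        apply hk
        have hkN : N0 ≤ k := by
          simp only [Finset.mem_coe, Finset.mem_range, not_lt] at hcon
          omega
        rw [hN0 k hkN]
        simp
      rw [finsum_eq_finset_sum_of_support_subset _ hsupp] at hskw
      intro t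
      rw [hskw, Finsupp.neg_apply, Finsupp.finset_sum_apply]
    have hzero : ∀ u v : S, ∀ t : ℕ, 1 ≤ t → (A.F t v u) 0 = 0 := by
      intro u v t ht
      obtain ⟨N, hN1, hNtr, hcoord⟩ := main u v
      rcases Nat.lt_or_ge t N with hlt | hge
      · have h1 := hcoord t
        rw [hS 0 t u v ht] at h1
        rw [Finset.sum_eq_single t ?side1 ?side2] at h1
        case side1 =>
          intro k _ hkt
          rw [Finsupp.smul_apply, Finsupp.single_apply, if_neg hkt]
          simp
        case side2 =>
          intro hcon
          exact absurd (Finset.mem_range.mpr hlt) hcon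
        rw [Finsupp.smul_apply, Finsupp.single_eq_same] at h1
        have hne : (((-1 : ℂ) ^ t) / (Nat.factorial t : ℂ)) ≠ 0 := by
          apply div_ne_zero
          · exact pow_ne_zero _ (by norm_num)
          · exact_mod_cast Nat.factorial_ne_zero t
        have h2 : ((-1 : ℂ) ^ t / (Nat.factorial t : ℂ)) • ((A.F t v u) 0) = 0 :=
          neg_eq_zero.mp h1.symm
        rcases smul_eq_zero.mp h2 with h | h
        · exact absurd h hne
        · exact h
      · rw [hNtr t hge]
        simp
    have hcoord0 : ∀ u v : S, (A.F 0 u v) 0 = -((A.F 0 v u) 0) := by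
      intro u v
      obtain ⟨N, hN1, hNtr, hcoord⟩ := main u v
      have h1 := hcoord 0
      rw [Finset.sum_eq_single 0 ?s1 ?s2] at h1
      case s1 =>
        intro k _ hk0
        rw [Finsupp.smul_apply, Finsupp.single_apply, if_neg hk0]
        simp
      case s2 =>
        intro hcon
        exact absurd (Finset.mem_range.mpr (by omega)) hcon
      rw [Finsupp.smul_apply, Finsupp.single_eq_same] at h1
      norm_num at h1
      exact h1
    refine ⟨?_, hcoord0, ?_⟩
    · intro n hn u v
      rw [hconc n u v, hzero v u n hn, Finsupp.single_zero]
    · intro u v w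
      have hj := hjac 0 0 0 (Finsupp.single 0 u) (Finsupp.single 0 v) (Finsupp.single 0 w)
      rw [finsum_eq_single _ 0 ?v1, finsum_eq_single _ 0 ?v2] at hj
      case v1 =>
        intro i hi
        rw [Nat.choose_eq_zero_of_lt (by omega)]
        simp
      case v2 =>
        intro i hi
        rw [Nat.choose_eq_zero_of_lt (by omega)]
        simp
      norm_num at hj
      rw [hM1 0 v w, hconc 0 v w, hM1 0 u ((A.F 0 v w) 0), hM1 0 u w, hconc 0 u w,
        hM1 0 v ((A.F 0 u w) 0), hM1 0 u v, hconc 0 u v,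
        hM1 0 ((A.F 0 u v) 0) w] at hj
      have := congrArg (fun g : ℕ →₀ S => g 0) hj
      simpa using this
  · rintro ⟨hvan, hsk0, hjac0⟩
    set Bl : S →ₗ[ℂ] S →ₗ[ℂ] S := (A.F 0).compr₂ (Finsupp.lapply 0) with hBldef
    have hBl : ∀ u v : S, Bl u v = (A.F 0 u v) 0 := fun u v => rfl
    have hF0 : ∀ u v : S, A.F 0 u v = Finsupp.single 0 (Bl u v) := by
      intro u v
      rw [hBl]
      exact hconc 0 u v
    have hskB : ∀ u v : S, Bl u v = -Bl v u := by
      intro u v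
      rw [hBl, hBl]
      exact hsk0 u v
    have hjacB : ∀ u v w : S, Bl u (Bl v w) - Bl v (Bl u w) = Bl (Bl u v) w := by
      intro u v w
      simp only [hBl]
      exact hjac0 u v w
    refine ⟨Stmt15aux.Mmap Bl, ⟨?_, ?_, ?_, ?_⟩, ?_, ?_⟩
    · intro n u v
      rw [Stmt15aux.Mmap_single]
      cases n with
      | zero =>
        rw [hF0 u v]
        have h1 : Stmt15aux.cc 0 0 0 = 1 := by
          simp [Stmt15aux.cc, Stmt15aux.dsc]
        rw [h1, one_smul]
      | succ n =>
        rw [hvan (n + 1) (by omega) u v]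
        have h1 : Stmt15aux.cc (n + 1) 0 0 = 0 := by
          simp only [Stmt15aux.cc]
          rw [Stmt15aux.dsc_eq_zero (show (0:ℕ) < n + 1 - 0 by omega)]
          ring
        rw [h1, zero_smul]
    · exact fun n x y => Stmt15aux.Mmap_D2 Bl n x y
    · exact fun x y => Stmt15aux.Mmap_D0 Bl x y
    · exact fun n x y => Stmt15aux.Mmap_D4 Bl n x y
    · exact fun n x y => Stmt15aux.Mmap_skew Bl hskB n x y
    · exact fun k m n x y z => Stmt15aux.Mmap_jacobi Bl hjacB k m n x y z

end
end

section
/- Let S be a formula over ℂ. Then ℂ[D]⊗S, with the unique extension of the products, satisfies the half Jacobi identity for all of its elements (is a VLA-SS) if and only if the half commutator relation holds on S, i.e. for all u,v,w ∈ S and all m,n ∈ ℕ: u_m(v_nw) − v_n(u_mw) = Σ_{i≥0} binom(m,i)·( (u_iv)_{m+n−i} w ) in ℂ[D]⊗S. -/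
open scoped BigOperators

noncomputable section

variable {S : Type*} [AddCommGroup S] [Module ℂ S]

/-!
Both sides of the half Jacobi identity obey the same recursion in `k`: by Pascal's rule the case
`(k + 1, m, n)` is the case `(k, m + 1, n)` minus the case `(k, m, n + 1)`. So the identity for all
`k` follows from its case `k = 0`, the half commutator relation. That relation is trilinear, and
its two sides transform in the same way when `D` is applied to any one argument (sesquilinearity,
and `D` being a derivation of every product); since `ℂ[D]⊗S` is spanned by the `D^a ⊗ u`, the
relation on `S` propagates to all of `ℂ[D]⊗S`.
-/

open Finset

theorem finsum_eq_sum_antidiagonal {V : Type*} [AddCommMonoid V] {g : ℕ → V} (k : ℕ)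
    (hg : ∀ i, k < i → g i = 0) : ∑ᶠ i, g i = ∑ p ∈ antidiagonal k, g p.1 := by
  rw [Nat.sum_antidiagonal_eq_sum_range_succ_mk]
  refine finsum_eq_sum_of_support_subset g fun i hi => ?_
  rw [coe_range, Set.mem_Iio]
  by_contra hik
  exact hi (hg i (by omega))

section

variable {V : Type*} [AddCommGroup V] [Module ℂ V]

theorem sum_antidiagonal_choose_succ_smul (f : ℕ → ℕ → V) (k : ℕ) :
    ∑ p ∈ antidiagonal (k + 1), ((k + 1).choose p.1 : ℂ) • f p.1 p.2
      = ∑ p ∈ antidiagonal k, (k.choose p.1 : ℂ) • f p.1 (p.2 + 1)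
        + ∑ p ∈ antidiagonal k, (k.choose p.1 : ℂ) • f (p.1 + 1) p.2 := by
  simp only [Nat.cast_smul_eq_nsmul]
  rw [sum_antidiagonal_choose_succ_nsmul]
  congr 1
  exact sum_congr rfl fun p hp => by
    rw [Nat.choose_symm_of_eq_add (mem_antidiagonal.1 hp).symm]

theorem sum_antidiagonal_choose_smul_fst_smul (f : ℕ → ℕ → V) (m : ℕ) :
    ∑ p ∈ antidiagonal m, (m.choose p.1 : ℂ) • (p.1 : ℂ) • f (p.1 - 1) p.2
      = (m : ℂ) • ∑ p ∈ antidiagonal (m - 1), ((m - 1).choose p.1 : ℂ) • f p.1 p.2 := by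
  cases m with
  | zero => simp
  | succ m =>
    rw [Nat.sum_antidiagonal_succ, Nat.add_sub_cancel, smul_sum]
    simp only [Nat.cast_zero, zero_smul, smul_zero, zero_add, Nat.add_sub_cancel, smul_smul]
    refine sum_congr rfl fun p _ => ?_
    congr 1
    exact_mod_cast (Nat.add_one_mul_choose_eq m p.1).symm

theorem sum_antidiagonal_choose_smul_snd_smul (f : ℕ → ℕ → V) (m : ℕ) :
    ∑ p ∈ antidiagonal m, (m.choose p.1 : ℂ) • (p.2 : ℂ) • f p.1 (p.2 - 1)
      = (m : ℂ) • ∑ p ∈ antidiagonal (m - 1), ((m - 1).choose p.1 : ℂ) • f p.1 p.2 := by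
  have swap (k : ℕ) (g : ℕ → ℕ → V) :
      ∑ p ∈ antidiagonal k, (k.choose p.1 : ℂ) • g p.1 p.2
        = ∑ p ∈ antidiagonal k, (k.choose p.1 : ℂ) • g p.2 p.1 := by
    rw [← Nat.sum_antidiagonal_swap]
    exact sum_congr rfl fun p hp => by
      rw [Prod.fst_swap, Prod.snd_swap,
        Nat.choose_symm_of_eq_add (mem_antidiagonal.1 hp).symm]
  rw [swap m fun i j => (j : ℂ) • f i (j - 1),
    sum_antidiagonal_choose_smul_fst_smul fun i j => f j i, swap (m - 1)]

/-- In `left_D`, `t - 1` is truncated at `t = 0`, where the coefficient `t` vanishes: the field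
also encodes `(D x)₀ y = 0`. -/
structure IsSesquilinear (D : V →ₗ[ℂ] V) (M : ℕ → V →ₗ[ℂ] V →ₗ[ℂ] V) : Prop where
  left_D : ∀ t x y, M t (D x) y = -(t : ℂ) • M (t - 1) x y
  D_apply : ∀ t x y, D (M t x y) = M t (D x) y + M t x (D y)

variable {D : V →ₗ[ℂ] V} {M : ℕ → V →ₗ[ℂ] V →ₗ[ℂ] V}

theorem IsSesquilinear.right_D (hM : IsSesquilinear D M) (t : ℕ) (x y : V) :
    M t x (D y) = D (M t x y) + (t : ℂ) • M (t - 1) x y := by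
  rw [hM.D_apply, hM.left_D, neg_smul]
  abel

variable (M) in
def commutatorAt (m n : ℕ) (x y z : V) : V :=
  M m x (M n y z) - M n y (M m x z)

variable (M) in
/-- `jacobiLHS` and `jacobiRHS` are the two sides of `HalfJacobi` summed over `i + j = k` and
`i + j = m` respectively; the sign `(-1)^(i+k)` of the second term on the left becomes `(-1)^j`. -/
def jacobiLHS (k m n : ℕ) (x y z : V) : V :=
  ∑ p ∈ antidiagonal k, (k.choose p.1 : ℂ) •
    ((-1 : ℂ) ^ p.1 • M (m + p.2) x (M (n + p.1) y z)
      - (-1 : ℂ) ^ p.2 • M (n + p.2) y (M (m + p.1) x z))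

variable (M) in
def jacobiRHS (k m n : ℕ) (x y z : V) : V :=
  ∑ p ∈ antidiagonal m, (m.choose p.1 : ℂ) • M (n + p.2) (M (k + p.1) x y) z

theorem commutatorAt_D_left (hM : IsSesquilinear D M) (m n : ℕ) (x y z : V) :
    commutatorAt M m n (D x) y z = -(m : ℂ) • commutatorAt M (m - 1) n x y z := by
  simp only [commutatorAt, hM.left_D, map_smul, smul_sub]

theorem jacobiRHS_zero_D_left (hM : IsSesquilinear D M) (m n : ℕ) (x y z : V) :
    jacobiRHS M 0 m n (D x) y z = -(m : ℂ) • jacobiRHS M 0 (m - 1) n x y z := by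
  simp only [jacobiRHS, zero_add, hM.left_D, neg_smul, map_neg, map_smul, LinearMap.neg_apply,
    LinearMap.smul_apply, smul_neg, sum_neg_distrib]
  rw [sum_antidiagonal_choose_smul_fst_smul fun i j => M (n + j) (M i x y) z]

theorem commutatorAt_D_right (hM : IsSesquilinear D M) (m n : ℕ) (x y z : V) :
    commutatorAt M m n x y (D z) = D (commutatorAt M m n x y z)
      + (m : ℂ) • commutatorAt M (m - 1) n x y z + (n : ℂ) • commutatorAt M m (n - 1) x y z := by
  simp only [commutatorAt, hM.right_D, map_add, map_smul, map_sub, smul_sub]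
  abel

theorem jacobiRHS_zero_D_right (hM : IsSesquilinear D M) (m n : ℕ) (x y z : V) :
    jacobiRHS M 0 m n x y (D z) = D (jacobiRHS M 0 m n x y z)
      + (m : ℂ) • jacobiRHS M 0 (m - 1) n x y z + (n : ℂ) • jacobiRHS M 0 m (n - 1) x y z := by
  have coeff_split (j : ℕ) (w : V) : ((n + j : ℕ) : ℂ) • M (n + j - 1) w z
      = (n : ℂ) • M (n - 1 + j) w z + (j : ℂ) • M (n + (j - 1)) w z := by
    rcases n with _ | n <;> rcases j with _ | j <;> simp [add_smul, ← add_assoc, add_right_comm _ 1]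
    abel
  simp only [jacobiRHS, zero_add, hM.right_D, smul_add, sum_add_distrib, map_sum, map_smul,
    coeff_split]
  rw [sum_antidiagonal_choose_smul_snd_smul fun i j => M (n + j) (M i x y) z,
    smul_sum (r := (n : ℂ)), sum_congr rfl fun _ _ => smul_comm (n : ℂ) _ _]
  abel

theorem commutatorAt_D_mid (hM : IsSesquilinear D M) (m n : ℕ) (x y z : V) :
    commutatorAt M m n x (D y) z = D (commutatorAt M m n x y z)
      - commutatorAt M m n (D x) y z - commutatorAt M m n x y (D z) := by
  simp only [commutatorAt, map_sub, hM.D_apply, map_add]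
  abel

theorem jacobiRHS_D_mid (hM : IsSesquilinear D M) (k m n : ℕ) (x y z : V) :
    jacobiRHS M k m n x (D y) z = D (jacobiRHS M k m n x y z)
      - jacobiRHS M k m n (D x) y z - jacobiRHS M k m n x y (D z) := by
  simp only [jacobiRHS, map_sum, map_smul, hM.D_apply, map_add, LinearMap.add_apply, smul_add,
    sum_add_distrib]
  abel

variable {x x' y y' z z' : V}

variable (M) in
def HalfCommutator (x y z : V) : Prop :=
  ∀ m n, commutatorAt M m n x y z = jacobiRHS M 0 m n x y z

namespace HalfCommutator

theorem zero_left : HalfCommutator M 0 y z := fun m n => by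
  simp [commutatorAt, jacobiRHS]

theorem zero_mid : HalfCommutator M x 0 z := fun m n => by
  simp [commutatorAt, jacobiRHS]

theorem zero_right : HalfCommutator M x y 0 := fun m n => by
  simp [commutatorAt, jacobiRHS]

theorem add_left (h : HalfCommutator M x y z) (h' : HalfCommutator M x' y z) :
    HalfCommutator M (x + x') y z := fun m n => by
  have e := h m n
  have e' := h' m n
  simp only [commutatorAt, jacobiRHS, map_add, LinearMap.add_apply, smul_add,
    sum_add_distrib] at e e' ⊢
  rw [← e, ← e']
  abel

theorem add_mid (h : HalfCommutator M x y z) (h' : HalfCommutator M x y' z) :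
    HalfCommutator M x (y + y') z := fun m n => by
  have e := h m n
  have e' := h' m n
  simp only [commutatorAt, jacobiRHS, map_add, LinearMap.add_apply, smul_add,
    sum_add_distrib] at e e' ⊢
  rw [← e, ← e']
  abel

theorem add_right (h : HalfCommutator M x y z) (h' : HalfCommutator M x y z') :
    HalfCommutator M x y (z + z') := fun m n => by
  have e := h m n
  have e' := h' m n
  simp only [commutatorAt, jacobiRHS, map_add, smul_add, sum_add_distrib] at e e' ⊢
  rw [← e, ← e']
  abel

theorem D_left (hM : IsSesquilinear D M) (h : HalfCommutator M x y z) :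
    HalfCommutator M (D x) y z := fun m n => by
  rw [commutatorAt_D_left hM, jacobiRHS_zero_D_left hM, h]

theorem D_right (hM : IsSesquilinear D M) (h : HalfCommutator M x y z) :
    HalfCommutator M x y (D z) := fun m n => by
  rw [commutatorAt_D_right hM, jacobiRHS_zero_D_right hM, h, h, h]

theorem D_mid (hM : IsSesquilinear D M) (h : HalfCommutator M x y z)
    (hDz : HalfCommutator M x y (D z)) :
    HalfCommutator M x (D y) z := fun m n => by
  rw [commutatorAt_D_mid hM, jacobiRHS_D_mid hM, h, h.D_left hM, hDz]

end HalfCommutator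

theorem jacobiLHS_zero (m n : ℕ) (x y z : V) :
    jacobiLHS M 0 m n x y z = commutatorAt M m n x y z := by
  simp [jacobiLHS, commutatorAt]

theorem jacobiLHS_succ (k m n : ℕ) (x y z : V) :
    jacobiLHS M (k + 1) m n x y z
      = jacobiLHS M k (m + 1) n x y z - jacobiLHS M k m (n + 1) x y z := by
  rw [jacobiLHS, sum_antidiagonal_choose_succ_smul fun i j =>
      (-1 : ℂ) ^ i • M (m + j) x (M (n + i) y z) - (-1 : ℂ) ^ j • M (n + j) y (M (m + i) x z),
    jacobiLHS, jacobiLHS, ← sum_sub_distrib, ← sum_add_distrib]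
  refine sum_congr rfl fun p _ => ?_
  rw [← smul_add, ← smul_sub]
  simp only [pow_succ, ← add_assoc, add_right_comm _ 1]
  module

theorem jacobiRHS_succ (k m n : ℕ) (x y z : V) :
    jacobiRHS M k (m + 1) n x y z
      = jacobiRHS M k m (n + 1) x y z + jacobiRHS M (k + 1) m n x y z := by
  rw [jacobiRHS, sum_antidiagonal_choose_succ_smul fun i j => M (n + j) (M (k + i) x y) z,
    jacobiRHS, jacobiRHS]
  simp only [← add_assoc, add_right_comm _ 1]

theorem jacobiLHS_eq_jacobiRHS (h : ∀ x y z, HalfCommutator M x y z) (k m n : ℕ) (x y z : V) :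
    jacobiLHS M k m n x y z = jacobiRHS M k m n x y z := by
  induction k generalizing m n with
  | zero => exact (jacobiLHS_zero m n x y z).trans (h x y z m n)
  | succ k ih => rw [jacobiLHS_succ, ih, ih, jacobiRHS_succ, add_sub_cancel_left]

theorem finsum_eq_jacobiRHS (k m n : ℕ) (x y z : V) :
    ∑ᶠ i, (m.choose i : ℂ) • M (m + n - i) (M (k + i) x y) z = jacobiRHS M k m n x y z := by
  rw [finsum_eq_sum_antidiagonal m fun i hi => by simp [Nat.choose_eq_zero_of_lt hi]]
  refine sum_congr rfl fun p hp => ?_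
  rw [show m + n - p.1 = n + p.2 by have := mem_antidiagonal.1 hp; omega]

theorem finsum_eq_jacobiLHS (k m n : ℕ) (x y z : V) :
    ∑ᶠ i, ((-1 : ℂ) ^ i * (k.choose i : ℂ)) •
        (M (m + k - i) x (M (n + i) y z) - ((-1 : ℂ) ^ k) • M (n + k - i) y (M (m + i) x z))
      = jacobiLHS M k m n x y z := by
  rw [finsum_eq_sum_antidiagonal k fun i hi => by simp [Nat.choose_eq_zero_of_lt hi]]
  refine sum_congr rfl fun p hp => ?_
  obtain ⟨i, j⟩ := p
  obtain rfl : i + j = k := mem_antidiagonal.1 hp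
  have hsq : (-1 : ℂ) ^ i * (-1) ^ i = 1 := by rw [← mul_pow]; norm_num
  rw [show m + (i + j) - i = m + j by omega, show n + (i + j) - i = n + j by omega, pow_add]
  linear_combination (norm := module)
    (-(((i + j).choose i : ℂ) * (-1) ^ j) * hsq) • M (n + j) y (M (m + i) x z)

end

theorem ExtProp.isSesquilinear {A : Formula S}
    {M : ℕ → (ℕ →₀ S) →ₗ[ℂ] (ℕ →₀ S) →ₗ[ℂ] (ℕ →₀ S)} (hM : ExtProp A M) :
    IsSesquilinear (Dop S) M where
  left_D t x y := by
    cases t with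
    | zero => simp [hM.2.2.1]
    | succ t => simpa using hM.2.1 t x y
  D_apply := hM.2.2.2

theorem Dop_induction {P : (ℕ →₀ S) → Prop} (zero : P 0)
    (add : ∀ x y, P x → P y → P (x + y)) (single : ∀ u, P (Finsupp.single 0 u))
    (dop : ∀ x, P x → P (Dop S x)) (x : ℕ →₀ S) : P x := by
  induction x using Finsupp.induction_linear with
  | zero => exact zero
  | add f g hf hg => exact add f g hf hg
  | single a u =>
    induction a with
    | zero => exact single u
    | succ a ih => simpa [Dop, Finsupp.mapDomain_single] using dop _ ih

theorem halfCommutator_of_single {M : ℕ → (ℕ →₀ S) →ₗ[ℂ] (ℕ →₀ S) →ₗ[ℂ] (ℕ →₀ S)}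
    (hM : IsSesquilinear (Dop S) M)
    (h : ∀ u v w : S, HalfCommutator M (.single 0 u) (.single 0 v) (.single 0 w))
    (x y z : ℕ →₀ S) : HalfCommutator M x y z := by
  have hz (u v : S) (z : ℕ →₀ S) : HalfCommutator M (.single 0 u) (.single 0 v) z := by
    induction z using Dop_induction with
    | zero => exact .zero_right
    | add z z' hz hz' => exact hz.add_right hz'
    | single w => exact h u v w
    | dop z hz => exact hz.D_right hM
  have hy (u : S) (y : ℕ →₀ S) : ∀ z, HalfCommutator M (.single 0 u) y z := by
    induction y using Dop_induction with
    | zero => exact fun _ => .zero_mid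
    | add y y' hy hy' => exact fun z => (hy z).add_mid (hy' z)
    | single v => exact hz u v
    | dop y hy => exact fun z => (hy z).D_mid hM (hy (Dop S z))
  induction x using Dop_induction with
  | zero => exact .zero_left
  | add x x' hx hx' => exact hx.add_left hx'
  | single u => exact hy u y z
  | dop x hx => exact hx.D_left hM

theorem halfJacobi_iff (M : ℕ → (ℕ →₀ S) →ₗ[ℂ] (ℕ →₀ S) →ₗ[ℂ] (ℕ →₀ S)) :
    HalfJacobi M ↔ ∀ k m n x y z, jacobiLHS M k m n x y z = jacobiRHS M k m n x y z := by
  simp only [HalfJacobi, finsum_eq_jacobiLHS, finsum_eq_jacobiRHS]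

/-- for a formula `S`, the extension of the products to `ℂ[D]⊗S`
satisfies the half Jacobi identity for all elements (is a VLA-SS) if and only if the
half commutator relation holds on `S`:
`u_m(v_nw) − v_n(u_mw) = Σ_{i≥0} binom(m,i)·((u_iv)_{m+n−i} w)` in `ℂ[D]⊗S`. -/
theorem stmt16 (A : Formula S)
    (M : ℕ → (ℕ →₀ S) →ₗ[ℂ] (ℕ →₀ S) →ₗ[ℂ] (ℕ →₀ S)) (hM : ExtProp A M) :
    HalfJacobi M ↔
      ∀ (m n : ℕ) (u v w : S),
        M m (Finsupp.single 0 u) (M n (Finsupp.single 0 v) (Finsupp.single 0 w))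
            - M n (Finsupp.single 0 v) (M m (Finsupp.single 0 u) (Finsupp.single 0 w))
          = ∑ᶠ i : ℕ, ((Nat.choose m i : ℂ)) •
              M (m + n - i) (A.F i u v) (Finsupp.single 0 w) := by
  have hRHS (m n : ℕ) (u v w : S) :
      ∑ᶠ i : ℕ, (m.choose i : ℂ) • M (m + n - i) (A.F i u v) (.single 0 w)
        = jacobiRHS M 0 m n (.single 0 u) (.single 0 v) (.single 0 w) := by
    simpa only [zero_add, hM.1] using
      finsum_eq_jacobiRHS (M := M) 0 m n (.single 0 u) (.single 0 v) (.single 0 w)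
  simp only [hRHS]
  rw [halfJacobi_iff]
  constructor
  · intro hJ m n u v w
    exact (jacobiLHS_zero m n _ _ _).symm.trans (hJ 0 m n _ _ _)
  · intro h
    exact jacobiLHS_eq_jacobiRHS (halfCommutator_of_single hM.isSesquilinear
      fun u v w m n => h m n u v w)

end
end
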